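/- arXiv:1102.2691 — 6 statements merged into one kernel-verified Lean document; each statement's English description precedes it below -/
import Mathlib

section
/- Let dμ and dν be bounded ℝ^k-valued measures on a measurable space X, and for ε ∈ ℝ set dμ_ε := dμ + ε dν with decompositions dμ_ε = N_ε |dμ_ε| and dν = A_ε |dμ_ε| + dν_s^ε where dν_s^ε ⊥ |dμ_ε|, and let F(ε) := ∫_X |dμ_ε|. Then F(ε) is Lipschitz continuous in ε, and for every ε₁ ∈ ℝ the one-sided derivatives exist and satisfy F'(ε₁+) = ∫_X N_{ε₁}·A_{ε₁} |dμ_{ε₁}| + ∫_X |dν_s^{ε₁}| and F'(ε₁−) = ∫_X N_{ε₁}·A_{ε₁} |dμ_{ε₁}| − ∫_X |dν_s^{ε₁}|. -/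
/-!
Fix `ε₁` and split `dν = A |dμ_{ε₁}| + dν_s` with `N = N_{ε₁}`. Then
`dμ_{ε₁+t} = (N + t A) |dμ_{ε₁}| + t dν_s` with mutually singular parts, so
`F (ε₁ + t) = ∫ ‖N + t A‖ |dμ_{ε₁}| + |t| |ν_s|(X)`.
Since `‖N‖ = 1`, the first term is differentiable at `t = 0` with derivative `∫ N·A |dμ_{ε₁}|`
(differentiate under the integral sign); the second is a kink of slopes `± |ν_s|(X)`.
The same identity bounds `|F (ε₁ + t) - F ε₁|` by `|t| (∫ ‖A‖ |dμ_{ε₁}| + |ν_s|(X)) = |t| |ν|(X)`.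
-/

open MeasureTheory Filter Set Topology
open scoped ENNReal NNReal InnerProductSpace

section TotalVariation

variable {X : Type*} [MeasurableSpace X] {E : Type*} [NormedAddCommGroup E]

theorem integral_norm_eq_measureReal_univ {μ : Measure X} {f : X → E}
    (hf : ∀ᵐ x ∂μ, ‖f x‖ = 1) : ∫ x, ‖f x‖ ∂μ = μ.real univ := by
  simp [integral_congr_ae hf]

variable [NormedSpace ℝ E] [CompleteSpace E]

theorem integral_norm_eq_of_forall_setIntegral_eq {lam rho : Measure X}
    [SigmaFinite lam] [SigmaFinite rho] {f g : X → E} (hf : Integrable f lam)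
    (hg : Integrable g rho)
    (h : ∀ S, MeasurableSet S → ∫ x in S, f x ∂lam = ∫ x in S, g x ∂rho) :
    ∫ x, ‖f x‖ ∂lam = ∫ x, ‖g x‖ ∂rho := by
  set σ := lam + rho
  have hlσ : lam ≪ σ := Measure.AbsolutelyContinuous.rfl.add_right rho
  have hrσ : rho ≪ σ := Measure.AbsolutelyContinuous.rfl.add_right' lam
  have hdens : (fun x => (lam.rnDeriv σ x).toReal • f x) =ᵐ[σ]
      fun x => (rho.rnDeriv σ x).toReal • g x := by
    refine Integrable.ae_eq_of_forall_setIntegral_eq _ _ ((integrable_rnDeriv_smul_iff hlσ).mpr hf)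
      ((integrable_rnDeriv_smul_iff hrσ).mpr hg) fun S hS _ => ?_
    rw [setIntegral_rnDeriv_smul hlσ hS, setIntegral_rnDeriv_smul hrσ hS, h S hS]
  calc ∫ x, ‖f x‖ ∂lam = ∫ x, ‖(lam.rnDeriv σ x).toReal • f x‖ ∂σ := by
        simp only [norm_smul_of_nonneg ENNReal.toReal_nonneg]
        exact (integral_rnDeriv_smul hlσ).symm
    _ = ∫ x, ‖(rho.rnDeriv σ x).toReal • g x‖ ∂σ := integral_congr_ae (hdens.fun_comp norm)
    _ = ∫ x, ‖g x‖ ∂rho := by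
        simp only [norm_smul_of_nonneg ENNReal.toReal_nonneg]
        exact integral_rnDeriv_smul hrσ

theorem integral_norm_eq_add_of_mutuallySingular {lam μ ν : Measure X}
    [SigmaFinite lam] [SigmaFinite μ] [SigmaFinite ν] (hsing : ν ⟂ₘ μ)
    {f p q : X → E} (hf : Integrable f lam) (hp : Integrable p μ) (hq : Integrable q ν)
    (h : ∀ S, MeasurableSet S → ∫ x in S, f x ∂lam = ∫ x in S, p x ∂μ + ∫ x in S, q x ∂ν) :
    ∫ x, ‖f x‖ ∂lam = ∫ x, ‖p x‖ ∂μ + ∫ x, ‖q x‖ ∂ν := by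
  classical
  obtain ⟨s, -, hνs, hμsc⟩ := hsing
  set g : X → E := s.piecewise p q
  have hgμ : g =ᵐ[μ] p := by
    filter_upwards [measure_eq_zero_iff_ae_notMem.mp hμsc] with x hx
    simp [g, notMem_compl_iff.mp hx]
  have hgν : g =ᵐ[ν] q := by
    filter_upwards [measure_eq_zero_iff_ae_notMem.mp hνs] with x hx
    simp [g, hx]
  have hgμint : Integrable g μ := hp.congr hgμ.symm
  have hgνint : Integrable g ν := hq.congr hgν.symm
  have hset : ∀ S, MeasurableSet S → ∫ x in S, f x ∂lam = ∫ x in S, g x ∂(μ + ν) := by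
    intro S hS
    rw [Measure.restrict_add, integral_add_measure hgμint.integrableOn hgνint.integrableOn,
      integral_congr_ae (ae_restrict_of_ae hgμ), integral_congr_ae (ae_restrict_of_ae hgν), h S hS]
  rw [integral_norm_eq_of_forall_setIntegral_eq hf (integrable_add_measure.mpr ⟨hgμint, hgνint⟩)
    hset, integral_add_measure hgμint.norm hgνint.norm]
  exact congr_arg₂ (· + ·) (integral_congr_ae (hgμ.fun_comp norm))
    (integral_congr_ae (hgν.fun_comp norm))

theorem measureReal_univ_eq_integral_norm_add_abs_mul {lam μ ν : Measure X}
    [SigmaFinite lam] [SigmaFinite μ] [SigmaFinite ν] (hsing : ν ⟂ₘ μ)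
    {f p q : X → E} (hf : Integrable f lam) (hf1 : ∀ᵐ x ∂lam, ‖f x‖ = 1)
    (hp : Integrable p μ) (hq : Integrable q ν) (hq1 : ∀ᵐ x ∂ν, ‖q x‖ = 1) (t : ℝ)
    (h : ∀ S, MeasurableSet S → ∫ x in S, f x ∂lam = ∫ x in S, p x ∂μ + t • ∫ x in S, q x ∂ν) :
    lam.real univ = ∫ x, ‖p x‖ ∂μ + |t| * ν.real univ := by
  have hsplit := integral_norm_eq_add_of_mutuallySingular (q := fun x => t • q x) hsing hf hp
    (hq.smul t) fun S hS => by rw [h S hS, integral_smul]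
  simp_rw [norm_smul, integral_const_mul, integral_norm_eq_measureReal_univ hf1,
    integral_norm_eq_measureReal_univ hq1, Real.norm_eq_abs] at hsplit
  exact hsplit

end TotalVariation

section NormAlongLine

variable {E : Type*} [NormedAddCommGroup E] [InnerProductSpace ℝ E]

theorem hasDerivAt_norm_add_smul {v : E} (hv : v ≠ 0) (w : E) :
    HasDerivAt (fun t : ℝ => ‖v + t • w‖) (⟪v, w⟫_ℝ / ‖v‖) 0 := by
  have hline : HasDerivAt (fun t : ℝ => v + t • w) w 0 := by
    simpa using ((hasDerivAt_id (0 : ℝ)).smul_const w).const_add v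
  have := hline.norm_sq.sqrt (by simpa using hv)
  simp only [Real.sqrt_sq (norm_nonneg _), zero_smul, add_zero] at this
  convert this using 1
  field_simp

theorem lipschitzWith_norm_add_smul (v w : E) :
    LipschitzWith ‖w‖₊ (fun t : ℝ => ‖v + t • w‖) :=
  LipschitzWith.of_dist_le_mul fun s t => by
    simpa [Real.dist_eq, ← sub_smul, norm_smul, mul_comm] using
      abs_norm_sub_norm_le (v + s • w) (v + t • w)

end NormAlongLine

section IntegralNormAlongLine

variable {X : Type*} [MeasurableSpace X] {μ : Measure X}
  {E : Type*} [NormedAddCommGroup E] [InnerProductSpace ℝ E] {f g : X → E}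

theorem abs_integral_norm_add_smul_sub_le (hf : Integrable f μ) (hg : Integrable g μ) (t : ℝ) :
    |∫ x, ‖f x + t • g x‖ ∂μ - ∫ x, ‖f x‖ ∂μ| ≤ |t| * ∫ x, ‖g x‖ ∂μ := by
  have hline : Integrable (fun x => ‖f x + t • g x‖) μ := (hf.add (hg.smul t)).norm
  rw [← integral_sub hline hf.norm, ← integral_const_mul]
  refine (abs_integral_le_integral_abs).trans (integral_mono (hline.sub hf.norm).abs
    (hg.norm.const_mul _) fun x => ?_)
  simpa [Real.dist_eq, mul_comm] using (lipschitzWith_norm_add_smul (f x) (g x)).dist_le_mul t 0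

theorem hasDerivAt_integral_norm_add_smul (hf : Integrable f μ) (hf1 : ∀ᵐ x ∂μ, ‖f x‖ = 1)
    (hg : Integrable g μ) :
    HasDerivAt (fun t : ℝ => ∫ x, ‖f x + t • g x‖ ∂μ) (∫ x, ⟪f x, g x⟫_ℝ ∂μ) 0 := by
  refine (hasDerivAt_integral_of_dominated_loc_of_lip (bound := fun x => ‖g x‖) univ_mem
    (Eventually.of_forall fun t => (hf.add (hg.smul t)).norm.aestronglyMeasurable)
    (by simpa using hf.norm) (hf.1.inner hg.1) ?_ hg.norm ?_).2
  · refine ae_of_all _ fun x => ?_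
    simpa using (lipschitzWith_norm_add_smul (f x) (g x)).lipschitzOnWith (s := univ)
  · filter_upwards [hf1] with x hx
    simpa [hx] using hasDerivAt_norm_add_smul (norm_ne_zero_iff.mp (hx.trans_ne one_ne_zero)) (g x)

end IntegralNormAlongLine

section KinkedFunctions

variable {F : ℝ → ℝ}

theorem HasDerivAt.hasDerivWithinAt_Ici_of_eq_add_abs_mul {H : ℝ → ℝ} {x D c : ℝ}
    (hH : HasDerivAt H D 0) (hF : ∀ t, F (x + t) = H t + |t| * c) :
    HasDerivWithinAt F (D + c) (Ici x) x := by
  have hshift : HasDerivAt (fun y => H (y - x) + (y - x) * c) (D + c) x :=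
    (HasDerivAt.comp_sub_const x x (by rwa [sub_self])).add
      (by simpa using ((hasDerivAt_id x).sub_const x).mul_const c)
  refine hshift.hasDerivWithinAt.congr (fun y (hy : x ≤ y) => ?_) (by simpa using hF 0)
  have := hF (y - x)
  rw [add_sub_cancel, abs_of_nonneg (sub_nonneg.mpr hy)] at this
  linarith

theorem HasDerivAt.hasDerivWithinAt_Iic_of_eq_add_abs_mul {H : ℝ → ℝ} {x D c : ℝ}
    (hH : HasDerivAt H D 0) (hF : ∀ t, F (x + t) = H t + |t| * c) :
    HasDerivWithinAt F (D - c) (Iic x) x := by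
  have hshift : HasDerivAt (fun y => H (y - x) - (y - x) * c) (D - c) x :=
    (HasDerivAt.comp_sub_const x x (by rwa [sub_self])).sub
      (by simpa using ((hasDerivAt_id x).sub_const x).mul_const c)
  refine hshift.hasDerivWithinAt.congr (fun y (hy : y ≤ x) => ?_) (by simpa using hF 0)
  have := hF (y - x)
  rw [add_sub_cancel, abs_of_nonpos (sub_nonpos.mpr hy)] at this
  linarith

theorem lipschitzWith_of_eq_add_abs_mul {H : ℝ → ℝ → ℝ} {m c : ℝ → ℝ} {K : ℝ≥0}
    (hF : ∀ a t, F (a + t) = H a t + |t| * c a) (hH : ∀ a t, |H a t - H a 0| ≤ |t| * m a)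
    (hc : ∀ a, 0 ≤ c a) (hK : ∀ a, m a + c a ≤ K) : LipschitzWith K F := by
  refine LipschitzWith.of_dist_le_mul fun b a => ?_
  obtain ⟨t, rfl⟩ : ∃ t, b = a + t := ⟨b - a, by ring⟩
  have hFa : F a = H a 0 := by simpa using hF a 0
  rw [Real.dist_eq, Real.dist_eq, hF, hFa, add_sub_cancel_left]
  calc |H a t + |t| * c a - H a 0| ≤ |H a t - H a 0| + |t| * c a := by
        rw [add_sub_right_comm]
        exact (abs_add_le _ _).trans_eq (by rw [abs_of_nonneg (mul_nonneg (abs_nonneg t) (hc a))])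
    _ ≤ |t| * (m a + c a) := by linarith [hH a t]
    _ ≤ K * |t| := by rw [mul_comm]; gcongr; exact hK a

end KinkedFunctions

/-- **First variation of the generalized area functional (Theorem B).**
A bounded `ℝ^k`-valued measure is modeled by its polar decomposition: a finite
total-variation measure together with a density of norm one a.e.  Here
`μtv ε`, `N ε` encode `dμ_ε = N_ε |dμ_ε|` (where `dμ_ε := dμ + ε dν`, so `dμ = dμ_0`),
`νtv`, `Nν` encode the polar decomposition `dν = Nν |dν|`, and
`A ε`, `νstv ε`, `Ns ε` encode the Radon–Nikodym decomposition
`dν = A_ε |dμ_ε| + dν_s^ε` with `dν_s^ε = Ns_ε |dν_s^ε| ⊥ |dμ_ε|`.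
The functional is `F(ε) = ∫_X |dμ_ε|`; it is Lipschitz and its one-sided
derivatives are `F'(ε₁±) = ∫ N_{ε₁}·A_{ε₁} |dμ_{ε₁}| ± ∫ |dν_s^{ε₁}|`. -/
theorem first_variation_of_generalized_area
    (X : Type*) [MeasurableSpace X] (k : ℕ)
    (μtv : ℝ → Measure X) (N A : ℝ → X → EuclideanSpace ℝ (Fin k))
    (νtv : Measure X) (Nν : X → EuclideanSpace ℝ (Fin k))
    (νstv : ℝ → Measure X) (Ns : ℝ → X → EuclideanSpace ℝ (Fin k))
    (hμfin : ∀ ε, IsFiniteMeasure (μtv ε))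
    (hνfin : IsFiniteMeasure νtv)
    (hνsfin : ∀ ε, IsFiniteMeasure (νstv ε))
    (hN1 : ∀ ε, ∀ᵐ x ∂(μtv ε), ‖N ε x‖ = 1)
    (hNν1 : ∀ᵐ x ∂νtv, ‖Nν x‖ = 1)
    (hNs1 : ∀ ε, ∀ᵐ x ∂(νstv ε), ‖Ns ε x‖ = 1)
    (hNint : ∀ ε, Integrable (N ε) (μtv ε))
    (hAint : ∀ ε, Integrable (A ε) (μtv ε))
    (hNνint : Integrable Nν νtv)
    (hNsint : ∀ ε, Integrable (Ns ε) (νstv ε))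
    (hsing : ∀ ε, (νstv ε).MutuallySingular (μtv ε))
    (hadd : ∀ ε : ℝ, ∀ S : Set X, MeasurableSet S →
      ∫ x in S, N ε x ∂(μtv ε) = (∫ x in S, N 0 x ∂(μtv 0)) + ε • ∫ x in S, Nν x ∂νtv)
    (hRN : ∀ ε : ℝ, ∀ S : Set X, MeasurableSet S →
      ∫ x in S, Nν x ∂νtv = (∫ x in S, A ε x ∂(μtv ε)) + ∫ x in S, Ns ε x ∂(νstv ε)) :
    (∃ K : ℝ≥0, LipschitzWith K (fun ε : ℝ => (μtv ε Set.univ).toReal)) ∧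
    ∀ ε₁ : ℝ,
      HasDerivWithinAt (fun ε : ℝ => (μtv ε Set.univ).toReal)
        ((∫ x, ⟪N ε₁ x, A ε₁ x⟫_ℝ ∂(μtv ε₁)) + (νstv ε₁ Set.univ).toReal) (Set.Ici ε₁) ε₁ ∧
      HasDerivWithinAt (fun ε : ℝ => (μtv ε Set.univ).toReal)
        ((∫ x, ⟪N ε₁ x, A ε₁ x⟫_ℝ ∂(μtv ε₁)) - (νstv ε₁ Set.univ).toReal) (Set.Iic ε₁) ε₁ := by
  have shift : ∀ ε₁ t : ℝ, ∀ S, MeasurableSet S →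
      ∫ x in S, N (ε₁ + t) x ∂(μtv (ε₁ + t)) =
        ∫ x in S, (N ε₁ x + t • A ε₁ x) ∂(μtv ε₁) + t • ∫ x in S, Ns ε₁ x ∂(νstv ε₁) := by
    intro ε₁ t S hS
    rw [hadd _ S hS, integral_add (g := fun x => t • A ε₁ x) (hNint ε₁).integrableOn
      ((hAint ε₁).smul t).integrableOn, integral_smul, hadd ε₁ S hS, hRN ε₁ S hS]
    module
  have key : ∀ ε₁ t : ℝ, (μtv (ε₁ + t)).real univ =
      ∫ x, ‖N ε₁ x + t • A ε₁ x‖ ∂(μtv ε₁) + |t| * (νstv ε₁).real univ := fun ε₁ t =>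
    measureReal_univ_eq_integral_norm_add_abs_mul (hsing ε₁) (hNint _) (hN1 _)
      ((hNint ε₁).add ((hAint ε₁).smul t)) (hNsint ε₁) (hNs1 ε₁) t (shift ε₁ t)
  have mass : ∀ ε, ∫ x, ‖A ε x‖ ∂(μtv ε) + (νstv ε).real univ = νtv.real univ := fun ε => by
    simpa using (measureReal_univ_eq_integral_norm_add_abs_mul (hsing ε) hNνint hNν1 (hAint ε)
      (hNsint ε) (hNs1 ε) 1 (by simpa using hRN ε)).symm
  refine ⟨⟨_, lipschitzWith_of_eq_add_abs_mul key ?_ (fun _ => measureReal_nonneg)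
    fun a => (mass a).le⟩, fun ε₁ => ?_⟩
  · intro a t
    simpa using abs_integral_norm_add_smul_sub_le (hNint a) (hAint a) t
  · have hH := hasDerivAt_integral_norm_add_smul (hNint ε₁) (hN1 ε₁) (hAint ε₁)
    exact ⟨hH.hasDerivWithinAt_Ici_of_eq_add_abs_mul (key ε₁),
      hH.hasDerivWithinAt_Iic_of_eq_add_abs_mul (key ε₁)⟩
end

section
/- Let Ω ⊂ ℝ^m be a bounded domain, F a C¹ vector field on the closure of Ω, and a > 0. Suppose v, w ∈ C²(closure of Ω) both satisfy div N_a(·) = 0 in Ω, where N_a(ρ) := (∇ρ + F)/√(a² + |∇ρ + F|²). Then for any subdomain Ω′ with compact closure in Ω (with boundary regular enough for the divergence theorem), | ∫_{Ω′} ( √(a² + |∇v + F|²) − √(a² + |∇w + F|²) ) d^m x | ≤ ∫_{∂Ω′} |v − w| dσ, where dσ is the boundary (surface) measure. -/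
/-!
The regularized area `A(p) = √(a² + |p|²)` is convex with gradient `N(p) = p / A(p)`, so
`A(∇v + F) - A(∇w + F) ≤ ⟨∇(v - w), N_a(v)⟩ = div ((v - w) N_a(v))`, the last step because
`div N_a(v) = 0`. Integrating over `Ω′` and applying the divergence theorem bounds the left
side by `∫_{∂Ω′} (v - w) ⟨N_a(v), ν⟩ dσ ≤ ∫_{∂Ω′} |v - w| dσ`, since `|N_a(v)| ≤ 1` and the
normal `ν` is a unit vector. Exchanging `v` and `w` gives the other half of the absolute value.
-/

open MeasureTheory Filter Set Topology Bornology
open scoped ENNReal NNReal InnerProductSpace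

noncomputable section

/-- The (Euclidean) divergence of a vector field on `ℝ^m`. -/
def divg {m : ℕ} (φ : EuclideanSpace ℝ (Fin m) → EuclideanSpace ℝ (Fin m))
    (x : EuclideanSpace ℝ (Fin m)) : ℝ :=
  ∑ i, fderiv ℝ φ x (EuclideanSpace.single i 1) i

/-- The total variation `∫_Ω |Du + F d^m x|` of `u ∈ L¹(Ω)`, defined by duality:
`sup { ∫_Ω (−u div φ⃗ + F·φ⃗) : φ⃗ ∈ C¹_0(Ω), |φ⃗| ≤ 1 }`. -/
def tvF {m : ℕ} (Ω : Set (EuclideanSpace ℝ (Fin m)))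
    (F : EuclideanSpace ℝ (Fin m) → EuclideanSpace ℝ (Fin m))
    (u : EuclideanSpace ℝ (Fin m) → ℝ) : ℝ≥0∞ :=
  ⨆ (φ : EuclideanSpace ℝ (Fin m) → EuclideanSpace ℝ (Fin m)) (_ : ContDiff ℝ 1 φ)
    (_ : HasCompactSupport φ) (_ : tsupport φ ⊆ Ω) (_ : ∀ x, ‖φ x‖ ≤ 1),
    ENNReal.ofReal (∫ x in Ω, (-(u x) * divg φ x + ⟪F x, φ x⟫_ℝ))

section RegularizedArea

variable {E : Type*} [NormedAddCommGroup E]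

def regArea (a : ℝ) (p : E) : ℝ := √(a ^ 2 + ‖p‖ ^ 2)

lemma regArea_nonneg (a : ℝ) (p : E) : 0 ≤ regArea a p := Real.sqrt_nonneg _

lemma sq_regArea (a : ℝ) (p : E) : regArea a p ^ 2 = a ^ 2 + ‖p‖ ^ 2 :=
  Real.sq_sqrt (by positivity)

lemma regArea_pos {a : ℝ} (ha : a ≠ 0) (p : E) : 0 < regArea a p :=
  Real.sqrt_pos.2 (by positivity)

lemma norm_le_regArea (a : ℝ) (p : E) : ‖p‖ ≤ regArea a p :=
  Real.le_sqrt_of_sq_le (le_add_of_nonneg_left (sq_nonneg a))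

variable [InnerProductSpace ℝ E]

def regNormal (a : ℝ) (p : E) : E := (regArea a p)⁻¹ • p

lemma norm_regNormal_le_one (a : ℝ) (p : E) : ‖regNormal a p‖ ≤ 1 := by
  rw [regNormal, norm_smul, norm_inv, Real.norm_of_nonneg (regArea_nonneg a p), inv_mul_eq_div]
  exact div_le_one_of_le₀ (norm_le_regArea a p) (regArea_nonneg a p)

lemma regArea_sub_regArea_le_inner (a : ℝ) (p q : E) :
    regArea a p - regArea a q ≤ ⟪p - q, regNormal a p⟫_ℝ := by
  rcases (regArea_nonneg a p).eq_or_lt with hP | hP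
  · have hp : p = 0 := by
      have := sq_regArea a p
      rw [← hP] at this
      exact norm_eq_zero.1 (by nlinarith [sq_nonneg a, norm_nonneg p])
    subst hp
    simp [regNormal, ← hP, regArea_nonneg]
  · have hPQ : a ^ 2 + ‖p‖ * ‖q‖ ≤ regArea a p * regArea a q := by
      refine le_of_pow_le_pow_left₀ two_ne_zero (by positivity [regArea_nonneg a q]) ?_
      rw [mul_pow, sq_regArea, sq_regArea]
      nlinarith [sq_nonneg (a * (‖p‖ - ‖q‖))]
    rw [regNormal, inner_smul_right, inner_sub_left, real_inner_self_eq_norm_sq,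
      real_inner_comm, ← div_eq_inv_mul, le_div_iff₀ hP]
    nlinarith [real_inner_le_norm p q, sq_regArea a p]

variable {a : ℝ} {n : WithTop ℕ∞}

lemma contDiff_regArea (ha : a ≠ 0) : ContDiff ℝ n (regArea (E := E) a) :=
  (contDiff_const.add (contDiff_norm_sq ℝ)).sqrt fun p => by positivity

lemma contDiff_regNormal (ha : a ≠ 0) : ContDiff ℝ n (regNormal (E := E) a) :=
  ((contDiff_regArea ha).inv fun p => (regArea_pos ha p).ne').smul contDiff_id

end RegularizedArea

lemma ContDiffOn.gradient_of_isOpen {E : Type*} [NormedAddCommGroup E] [InnerProductSpace ℝ E]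
    [CompleteSpace E] {u : E → ℝ} {s : Set E} {n k : WithTop ℕ∞} (hu : ContDiffOn ℝ n u s) (hs : IsOpen s) (hkn : k + 1 ≤ n) :
    ContDiffOn ℝ k (gradient u) s :=
  (InnerProductSpace.toDual ℝ E).symm.contDiff.comp_contDiffOn (hu.fderiv_of_isOpen hs hkn)

lemma IsCompact.integrableOn_of_continuousOn_of_measure_ne_top {α β : Type*}
    [TopologicalSpace α] [T2Space α] [MeasurableSpace α] [OpensMeasurableSpace α]
    [NormedAddCommGroup β] [SecondCountableTopologyEither α β] {μ : Measure α} {K : Set α}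
    {f : α → β} (hK : IsCompact K) (hμK : μ K ≠ ∞) (hf : ContinuousOn f K) : IntegrableOn f K μ := by
  obtain ⟨C, hC⟩ := hK.exists_bound_of_continuousOn hf
  exact IntegrableOn.of_bound hμK.lt_top (hf.aestronglyMeasurable hK.measurableSet) C
    (ae_restrict_of_forall_mem hK.measurableSet hC)

lemma setIntegral_inner_smul_le_integral_abs {α E : Type*} [MeasurableSpace α]
    [NormedAddCommGroup E] [InnerProductSpace ℝ E] {μ : Measure α} {S : Set α}
    {g : α → ℝ} {φ ν : α → E} (hS : MeasurableSet S) (hg : IntegrableOn g S μ)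
    (hφ : ∀ x ∈ S, ‖φ x‖ ≤ 1) (hν : ∀ x ∈ S, ‖ν x‖ ≤ 1) :
    ∫ x in S, ⟪g x • φ x, ν x⟫_ℝ ∂μ ≤ ∫ x in S, |g x| ∂μ := by
  refine (le_abs_self _).trans ?_
  rw [← Real.norm_eq_abs]
  refine norm_integral_le_of_norm_le hg.abs ?_
  refine ae_restrict_of_forall_mem hS fun x hx => ?_
  calc ‖⟪g x • φ x, ν x⟫_ℝ‖
      ≤ ‖g x • φ x‖ * ‖ν x‖ := norm_inner_le_norm _ _
    _ ≤ |g x| * 1 * 1 := by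
      rw [norm_smul, Real.norm_eq_abs]
      gcongr
      exacts [hφ x hx, hν x hx]
    _ = |g x| := by ring

section Divergence

variable {m : ℕ}

lemma divg_smul {f : EuclideanSpace ℝ (Fin m) → ℝ}
    {φ : EuclideanSpace ℝ (Fin m) → EuclideanSpace ℝ (Fin m)}
    {x : EuclideanSpace ℝ (Fin m)}
    (hf : DifferentiableAt ℝ f x) (hφ : DifferentiableAt ℝ φ x) :
    divg (fun y => f y • φ y) x = ⟪gradient f x, φ x⟫_ℝ + f x * divg φ x := by
  have hf' :
      fderiv ℝ f x (φ x) = ∑ i, fderiv ℝ f x (EuclideanSpace.single i 1) * φ x i := by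
    conv_lhs => rw [← (EuclideanSpace.basisFun (Fin m) ℝ).sum_repr (φ x)]
    simp [mul_comm]
  simp only [divg, fderiv_fun_smul hf hφ, add_apply, smul_apply,
    ContinuousLinearMap.smulRight_apply, PiLp.add_apply, PiLp.smul_apply, smul_eq_mul, Finset.sum_add_distrib, ← Finset.mul_sum,
    inner_gradient_left, hf']
  ring

lemma divg_sub_smul_regNormal {a : ℝ}
    {F : EuclideanSpace ℝ (Fin m) → EuclideanSpace ℝ (Fin m)}
    {v w : EuclideanSpace ℝ (Fin m) → ℝ} {x : EuclideanSpace ℝ (Fin m)}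
    (hv : DifferentiableAt ℝ v x) (hw : DifferentiableAt ℝ w x)
    (hN : DifferentiableAt ℝ (fun y => regNormal a (gradient v y + F y)) x)
    (hdiv : divg (fun y => regNormal a (gradient v y + F y)) x = 0) :
    divg (fun y => (v y - w y) • regNormal a (gradient v y + F y)) x =
      ⟪(gradient v x + F x) - (gradient w x + F x), regNormal a (gradient v x + F x)⟫_ℝ := by
  rw [divg_smul (f := fun y => v y - w y) (hv.sub hw) hN, hdiv, mul_zero, add_zero,
    add_sub_add_right_eq_sub, inner_sub_left, inner_gradient_left, inner_gradient_left,
    inner_gradient_left, fderiv_fun_sub hv hw, sub_apply]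

lemma setIntegral_regArea_sub_le {U Ω' : Set (EuclideanSpace ℝ (Fin m))} (hU : IsOpen U)
    (hΩ' : IsOpen Ω') (hΩ'U : closure Ω' ⊆ U) (hK : IsCompact (closure Ω'))
    {F : EuclideanSpace ℝ (Fin m) → EuclideanSpace ℝ (Fin m)} (hF : ContDiffOn ℝ 1 F U)
    {a : ℝ} (ha : a ≠ 0) {v w : EuclideanSpace ℝ (Fin m) → ℝ}
    (hv : ContDiffOn ℝ 2 v U) (hw : ContDiffOn ℝ 2 w U)
    (hveq : ∀ x ∈ Ω', divg (fun y => regNormal a (gradient v y + F y)) x = 0)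
    {σ : Measure (EuclideanSpace ℝ (Fin m))} (hσ : σ (frontier Ω') ≠ ∞)
    {ν : EuclideanSpace ℝ (Fin m) → EuclideanSpace ℝ (Fin m)}
    (hν : ∀ x ∈ frontier Ω', ‖ν x‖ = 1)
    (hdiv : ∀ G : EuclideanSpace ℝ (Fin m) → EuclideanSpace ℝ (Fin m),
      ContDiffOn ℝ 1 G (closure Ω') →
        ∫ x in Ω', divg G x = ∫ x in frontier Ω', ⟪G x, ν x⟫_ℝ ∂σ) :
    ∫ x in Ω', (regArea a (gradient v x + F x) - regArea a (gradient w x + F x)) ≤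
      ∫ x in frontier Ω', |v x - w x| ∂σ := by
  have hXv : ContDiffOn ℝ 1 (fun y => gradient v y + F y) U :=
    (hv.gradient_of_isOpen hU (by norm_num)).add hF
  have hXw : ContDiffOn ℝ 1 (fun y => gradient w y + F y) U :=
    (hw.gradient_of_isOpen hU (by norm_num)).add hF
  have hNv : ContDiffOn ℝ 1 (fun y => regNormal a (gradient v y + F y)) U :=
    (contDiff_regNormal ha).comp_contDiffOn hXv
  have hdivG : ∀ x ∈ Ω', divg (fun y => (v y - w y) • regNormal a (gradient v y + F y)) x =
      ⟪(gradient v x + F x) - (gradient w x + F x), regNormal a (gradient v x + F x)⟫_ℝ := by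
    intro x hx
    have hxU : U ∈ 𝓝 x := hU.mem_nhds (hΩ'U (subset_closure hx))
    exact divg_sub_smul_regNormal ((hv.contDiffAt hxU).differentiableAt (by norm_num))
      ((hw.contDiffAt hxU).differentiableAt (by norm_num))
      ((hNv.contDiffAt hxU).differentiableAt one_ne_zero) (hveq x hx)
  have hint : ∀ f : EuclideanSpace ℝ (Fin m) → ℝ, ContinuousOn f U → IntegrableOn f Ω' :=
    fun f hf => ((hf.mono hΩ'U).integrableOn_compact hK).mono_set subset_closure
  have hA : Continuous (regArea (E := EuclideanSpace ℝ (Fin m)) a) :=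
    (contDiff_regArea (n := 0) ha).continuous
  have hbdry : IntegrableOn (fun x => v x - w x) (frontier Ω') σ :=
    IsCompact.integrableOn_of_continuousOn_of_measure_ne_top
      (hK.of_isClosed_subset isClosed_frontier frontier_subset_closure) hσ
      ((hv.continuousOn.sub hw.continuousOn).mono (frontier_subset_closure.trans hΩ'U))
  calc ∫ x in Ω', (regArea a (gradient v x + F x) - regArea a (gradient w x + F x))
      ≤ ∫ x in Ω', ⟪(gradient v x + F x) - (gradient w x + F x),
          regNormal a (gradient v x + F x)⟫_ℝ :=
        setIntegral_mono_on (hint _ ((hA.comp_continuousOn hXv.continuousOn).sub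
          (hA.comp_continuousOn hXw.continuousOn)))
          (hint _ ((hXv.continuousOn.sub hXw.continuousOn).inner (𝕜 := ℝ) hNv.continuousOn))
          hΩ'.measurableSet fun x _ => regArea_sub_regArea_le_inner a _ _
    _ = ∫ x in Ω', divg (fun y => (v y - w y) • regNormal a (gradient v y + F y)) x :=
        setIntegral_congr_fun hΩ'.measurableSet fun x hx => (hdivG x hx).symm
    _ = ∫ x in frontier Ω',
          ⟪(v x - w x) • regNormal a (gradient v x + F x), ν x⟫_ℝ ∂σ :=
        hdiv _ ((((hv.sub hw).of_le (by norm_num)).smul hNv).mono hΩ'U)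
    _ ≤ ∫ x in frontier Ω', |v x - w x| ∂σ :=
        setIntegral_inner_smul_le_integral_abs isClosed_frontier.measurableSet hbdry
          (fun x _ => norm_regNormal_le_one a _) fun x hx => (hν x hx).le

end Divergence

theorem comparison_of_regularized_areas_general
    {m : ℕ} (Ω : Set (EuclideanSpace ℝ (Fin m)))
    (hopen : IsOpen Ω)
    (F : EuclideanSpace ℝ (Fin m) → EuclideanSpace ℝ (Fin m))
    (hF : ContDiffOn ℝ 1 F (closure Ω))
    (a : ℝ) (ha : 0 < a)
    (v w : EuclideanSpace ℝ (Fin m) → ℝ)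
    (hv : ContDiffOn ℝ 2 v (closure Ω)) (hw : ContDiffOn ℝ 2 w (closure Ω))
    (hveq : ∀ x ∈ Ω, divg
      (fun y => (Real.sqrt (a ^ 2 + ‖gradient v y + F y‖ ^ 2))⁻¹ • (gradient v y + F y)) x = 0)
    (hweq : ∀ x ∈ Ω, divg
      (fun y => (Real.sqrt (a ^ 2 + ‖gradient w y + F y‖ ^ 2))⁻¹ • (gradient w y + F y)) x = 0)
    (Ω' : Set (EuclideanSpace ℝ (Fin m)))
    (hΩ'open : IsOpen Ω') (hΩ'sub : closure Ω' ⊆ Ω) (hΩ'cpt : IsCompact (closure Ω'))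
    (hσfin : μH[(m : ℝ) - 1] (frontier Ω') ≠ ⊤)
    -- the divergence theorem holds on `Ω′`
    (hdivthm : ∃ nrm : EuclideanSpace ℝ (Fin m) → EuclideanSpace ℝ (Fin m),
      (∀ x ∈ frontier Ω', ‖nrm x‖ = 1) ∧
      ∀ G : EuclideanSpace ℝ (Fin m) → EuclideanSpace ℝ (Fin m),
        ContDiffOn ℝ 1 G (closure Ω') →
        ∫ x in Ω', divg G x =
          ∫ x in frontier Ω', ⟪G x, nrm x⟫_ℝ ∂(μH[(m : ℝ) - 1])) :
    |(∫ x in Ω', (Real.sqrt (a ^ 2 + ‖gradient v x + F x‖ ^ 2) -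
        Real.sqrt (a ^ 2 + ‖gradient w x + F x‖ ^ 2)))| ≤
      ∫ x in frontier Ω', |v x - w x| ∂(μH[(m : ℝ) - 1]) := by
  obtain ⟨ν, hν, hdiv⟩ := hdivthm
  have hvΩ := hv.mono subset_closure
  have hwΩ := hw.mono subset_closure
  have hFΩ := hF.mono subset_closure
  have hvw := setIntegral_regArea_sub_le hopen hΩ'open hΩ'sub hΩ'cpt hFΩ ha.ne' hvΩ hwΩ
    (fun x hx => hveq x (hΩ'sub (subset_closure hx))) hσfin hν hdiv
  have hwv := setIntegral_regArea_sub_le hopen hΩ'open hΩ'sub hΩ'cpt hFΩ ha.ne' hwΩ hvΩ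
    (fun x hx => hweq x (hΩ'sub (subset_closure hx))) hσfin hν hdiv
  simp only [abs_sub_comm (w _) (v _)] at hwv
  show |∫ x in Ω', (regArea a (gradient v x + F x) - regArea a (gradient w x + F x))| ≤ _
  refine abs_le.2 ⟨?_, hvw⟩
  rw [neg_le, ← integral_neg]
  simpa only [neg_sub] using hwv

/-- **Lemma 2.3: comparison of regularized area integrands via boundary values.**
Let `Ω ⊂ ℝ^m` be a bounded domain, `F` a `C¹` vector field on `closure Ω`, `a > 0`,
and let `v, w ∈ C²(closure Ω)` both satisfy `div N_a(·) = 0` in `Ω`, where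
`N_a(ρ) = (∇ρ + F)/√(a² + |∇ρ + F|²)`.  Then for every subdomain `Ω′ ⊂⊂ Ω` whose
boundary is regular enough for the divergence theorem (expressed by the existence of a
unit normal field for which the divergence theorem holds, with finite surface measure),
`|∫_{Ω′} (√(a² + |∇v + F|²) − √(a² + |∇w + F|²))| ≤ ∫_{∂Ω′} |v − w| dσ`,
`dσ` being the `(m−1)`-dimensional Hausdorff (surface) measure. -/
theorem comparison_of_regularized_areas
    {m : ℕ} (Ω : Set (EuclideanSpace ℝ (Fin m)))
    (hopen : IsOpen Ω) (hconn : IsConnected Ω) (hbdd : IsBounded Ω)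
    (F : EuclideanSpace ℝ (Fin m) → EuclideanSpace ℝ (Fin m))
    (hF : ContDiffOn ℝ 1 F (closure Ω))
    (a : ℝ) (ha : 0 < a)
    (v w : EuclideanSpace ℝ (Fin m) → ℝ)
    (hv : ContDiffOn ℝ 2 v (closure Ω)) (hw : ContDiffOn ℝ 2 w (closure Ω))
    (hveq : ∀ x ∈ Ω, divg
      (fun y => (Real.sqrt (a ^ 2 + ‖gradient v y + F y‖ ^ 2))⁻¹ • (gradient v y + F y)) x = 0)
    (hweq : ∀ x ∈ Ω, divg
      (fun y => (Real.sqrt (a ^ 2 + ‖gradient w y + F y‖ ^ 2))⁻¹ • (gradient w y + F y)) x = 0)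
    (Ω' : Set (EuclideanSpace ℝ (Fin m)))
    (hΩ'open : IsOpen Ω') (hΩ'sub : closure Ω' ⊆ Ω) (hΩ'cpt : IsCompact (closure Ω'))
    (hσfin : μH[(m : ℝ) - 1] (frontier Ω') ≠ ⊤)
    -- the divergence theorem holds on `Ω′`
    (hdivthm : ∃ nrm : EuclideanSpace ℝ (Fin m) → EuclideanSpace ℝ (Fin m),
      (∀ x ∈ frontier Ω', ‖nrm x‖ = 1) ∧
      ∀ G : EuclideanSpace ℝ (Fin m) → EuclideanSpace ℝ (Fin m),
        ContDiffOn ℝ 1 G (closure Ω') →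
        ∫ x in Ω', divg G x =
          ∫ x in frontier Ω', ⟪G x, nrm x⟫_ℝ ∂(μH[(m : ℝ) - 1])) :
    |(∫ x in Ω', (Real.sqrt (a ^ 2 + ‖gradient v x + F x‖ ^ 2) -
        Real.sqrt (a ^ 2 + ‖gradient w x + F x‖ ^ 2)))| ≤
      ∫ x in frontier Ω', |v x - w x| ∂(μH[(m : ℝ) - 1]) :=
  comparison_of_regularized_areas_general Ω hopen F hF a ha v w hv hw hveq hweq Ω' hΩ'open hΩ'sub
    hΩ'cpt hσfin hdivthm

end
end

section
/- Let dμ and dν be bounded ℝ^k-valued measures on a measurable space X, and for each ε ∈ ℝ write dν = A_ε |dμ_ε| + dν_s^ε with dν_s^ε ⊥ |dμ_ε|, where dμ_ε := dμ + ε dν. Then for ε₁ ≠ ε₂ the singular parts are mutually singular: |dν_s^{ε₁}| ⊥ |dν_s^{ε₂}|. Moreover, there exist at most countably many ε ∈ ℝ such that |dν_s^ε|(X) ≠ 0. -/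
open MeasureTheory Filter Set
open scoped ENNReal

/-
Write `C_ε` for a `|dμ_ε|`-null set carrying `dν_s^ε`. On `C_ε` the decomposition
`dν = A_ε |dμ_ε| + dν_s^ε` reduces to `dν = dν_s^ε`, so `dν_s^ε` vanishes on every part of `C_ε`
on which the vector measure `dν` vanishes; as `dν_s^ε` has a unit-norm density with respect to
`|dν_s^ε|`, such a part is `|dν_s^ε|`-null. On `C_{ε₁} ∩ C_{ε₂}` both `dμ_{ε₁}` and `dμ_{ε₂}` vanish,
so `(ε₁ - ε₂) dν = dμ_{ε₁} - dμ_{ε₂}` vanishes there. This gives mutual singularity, and also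
shows that the sets `C_ε` are pairwise `|dν|`-null in their intersections; since `|dν|` is finite,
only countably many of them have positive `|dν|`-measure, and `|dν_s^ε| = 0` for the others.
-/

namespace MeasureTheory

variable {X E : Type*} [MeasurableSpace X] [NormedAddCommGroup E] [NormedSpace ℝ E]

/-- The vector measure `f ρ` vanishes on `W`. -/
def IntegralVanishesOn (f : X → E) (ρ : Measure X) (W : Set X) : Prop :=
  ∀ S, MeasurableSet S → S ⊆ W → ∫ x in S, f x ∂ρ = 0

lemma integralVanishesOn_of_measure_eq_zero {f : X → E} {ρ : Measure X} {W : Set X}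
    (hW : ρ W = 0) : IntegralVanishesOn f ρ W :=
  fun _ _ hSW => setIntegral_measure_zero f (measure_mono_null hSW hW)

lemma IntegralVanishesOn.measure_eq_zero [CompleteSpace E] {f : X → E} {ρ : Measure X}
    {W : Set X} (h : IntegralVanishesOn f ρ W) (hf : Integrable f ρ)
    (hf_norm : ∀ᵐ x ∂ρ, ‖f x‖ = 1) (hW : MeasurableSet W) : ρ W = 0 := by
  have hf_zero : f =ᵐ[ρ.restrict W] 0 :=
    hf.restrict.ae_eq_zero_of_forall_setIntegral_eq_zero fun S hS _ => by
      rw [Measure.restrict_restrict hS]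
      exact h _ (hS.inter hW) inter_subset_right
  have h_false : ∀ᵐ _ ∂ρ.restrict W, False := by
    filter_upwards [hf_zero, ae_restrict_of_ae hf_norm] with x hx hx_norm
    simp [hx] at hx_norm
  exact Measure.restrict_eq_zero.mp (ae_eq_bot.mp (eventually_false_iff_eq_bot.mp h_false))

/-- If `μ_ε = μ_0 + ε f ν` as vector measures, `f ν` vanishes wherever two of the `μ_ε` do. -/
lemma integralVanishesOn_of_null_of_null {μ : ℝ → Measure X} {N : ℝ → X → E} {ν : Measure X}
    {f : X → E} (b : Set X → E)
    (hadd : ∀ ε S, MeasurableSet S → ∫ x in S, N ε x ∂μ ε = b S + ε • ∫ x in S, f x ∂ν)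
    {ε₁ ε₂ : ℝ} (hne : ε₁ ≠ ε₂) {W : Set X} (h₁ : μ ε₁ W = 0) (h₂ : μ ε₂ W = 0) :
    IntegralVanishesOn f ν W := by
  intro S hS hSW
  have hS₁ := hadd ε₁ S hS
  have hS₂ := hadd ε₂ S hS
  rw [setIntegral_measure_zero _ (measure_mono_null hSW h₁)] at hS₁
  rw [setIntegral_measure_zero _ (measure_mono_null hSW h₂)] at hS₂
  by_contra h_ne
  exact hne (smul_left_injective ℝ h_ne (add_left_cancel (hS₁.symm.trans hS₂)))

/-- On the `μ`-null set `T ∩ C` the decomposition `f ν = A μ + g ρ` reads `f ν = g ρ`. -/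
lemma measure_eq_zero_of_integralVanishesOn_inter [CompleteSpace E] {ν μ ρ : Measure X}
    {f A g : X → E}
    (hdecomp : ∀ S, MeasurableSet S →
      ∫ x in S, f x ∂ν = (∫ x in S, A x ∂μ) + ∫ x in S, g x ∂ρ)
    (hg : Integrable g ρ) (hg_norm : ∀ᵐ x ∂ρ, ‖g x‖ = 1)
    {C : Set X} (hC : MeasurableSet C) (hμC : μ C = 0) (hρC : ρ Cᶜ = 0)
    {T : Set X} (hT : MeasurableSet T) (hvanish : IntegralVanishesOn f ν (T ∩ C)) : ρ T = 0 := by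
  have hρTC : ρ (T ∩ C) = 0 := by
    refine IntegralVanishesOn.measure_eq_zero (fun S hS hSTC => ?_) hg hg_norm (hT.inter hC)
    have hμS : μ S = 0 := measure_mono_null (hSTC.trans inter_subset_right) hμC
    rw [← hvanish S hS hSTC, hdecomp S hS, setIntegral_measure_zero _ hμS, zero_add]
  rw [← inter_union_compl T C]
  exact measure_union_null hρTC (measure_mono_null inter_subset_right hρC)

end MeasureTheory

theorem singular_parts_mutually_singular_and_countable_general
    (X : Type*) [MeasurableSpace X] (k : ℕ)
    (μtv : ℝ → Measure X) (N A : ℝ → X → EuclideanSpace ℝ (Fin k))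
    (νtv : Measure X) (Nν : X → EuclideanSpace ℝ (Fin k))
    (νstv : ℝ → Measure X) (Ns : ℝ → X → EuclideanSpace ℝ (Fin k))
    (hνfin : IsFiniteMeasure νtv)
    (hNν1 : ∀ᵐ x ∂νtv, ‖Nν x‖ = 1)
    (hNs1 : ∀ ε, ∀ᵐ x ∂(νstv ε), ‖Ns ε x‖ = 1)
    (hNνint : Integrable Nν νtv)
    (hNsint : ∀ ε, Integrable (Ns ε) (νstv ε))
    (hsing : ∀ ε, (νstv ε).MutuallySingular (μtv ε))
    (hadd : ∀ ε : ℝ, ∀ S : Set X, MeasurableSet S →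
      ∫ x in S, N ε x ∂(μtv ε) = (∫ x in S, N 0 x ∂(μtv 0)) + ε • ∫ x in S, Nν x ∂νtv)
    (hRN : ∀ ε : ℝ, ∀ S : Set X, MeasurableSet S →
      ∫ x in S, Nν x ∂νtv = (∫ x in S, A ε x ∂(μtv ε)) + ∫ x in S, Ns ε x ∂(νstv ε))
    : (∀ ε₁ ε₂ : ℝ, ε₁ ≠ ε₂ → (νstv ε₁).MutuallySingular (νstv ε₂)) ∧
      Set.Countable {ε : ℝ | νstv ε Set.univ ≠ 0} := by
  set C : ℝ → Set X := fun ε => (hsing ε).nullSetᶜ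
  have hC : ∀ ε, MeasurableSet (C ε) := fun ε => (hsing ε).measurableSet_nullSet.compl
  have hμC : ∀ ε, μtv ε (C ε) = 0 := fun ε => (hsing ε).measure_compl_nullSet
  have hνsC : ∀ ε, νstv ε (C ε)ᶜ = 0 := fun ε => by simp [C]
  have hvanish : ∀ ε₁ ε₂, ε₁ ≠ ε₂ → IntegralVanishesOn Nν νtv (C ε₁ ∩ C ε₂) :=
    fun ε₁ ε₂ hne => integralVanishesOn_of_null_of_null _ hadd hne
      (measure_mono_null inter_subset_left (hμC ε₁)) (measure_mono_null inter_subset_right (hμC ε₂))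
  have hνs_null : ∀ ε T, MeasurableSet T → IntegralVanishesOn Nν νtv (T ∩ C ε) → νstv ε T = 0 :=
    fun ε _ hT => measure_eq_zero_of_integralVanishesOn_inter (hRN ε) (hNsint ε) (hNs1 ε) (hC ε)
      (hμC ε) (hνsC ε) hT
  refine ⟨fun ε₁ ε₂ hne => ⟨(C ε₁)ᶜ, (hC ε₁).compl, hνsC ε₁, ?_⟩, ?_⟩
  · rw [compl_compl]
    exact hνs_null ε₂ _ (hC ε₁) (hvanish ε₁ ε₂ hne)
  · have hdisj : Pairwise (Function.onFun (AEDisjoint νtv) C) := fun ε₁ ε₂ hne =>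
      (hvanish ε₁ ε₂ hne).measure_eq_zero hNνint hNν1 ((hC ε₁).inter (hC ε₂))
    refine (Measure.countable_meas_pos_of_disjoint_iUnion₀ (fun ε => (hC ε).nullMeasurableSet)
      hdisj).mono fun ε hε => (pos_iff_ne_zero (α := ℝ≥0∞)).mpr fun hνC => hε ?_
    exact hνs_null ε univ MeasurableSet.univ
      (integralVanishesOn_of_measure_eq_zero (by rwa [univ_inter]))

/-- **Mutual singularity of the singular parts and countability of singular values
(Lemma 3.1).**  Setup as in Theorem B: `dμ_ε := dμ + ε dν` with
`dν = A_ε |dμ_ε| + dν_s^ε`, `dν_s^ε ⊥ |dμ_ε|`.  For `ε₁ ≠ ε₂` the singular parts are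
mutually singular, `|dν_s^{ε₁}| ⊥ |dν_s^{ε₂}|`, and there are at most countably
many `ε` with `|dν_s^ε|(X) ≠ 0`. -/
theorem singular_parts_mutually_singular_and_countable
    (X : Type*) [MeasurableSpace X] (k : ℕ)
    (μtv : ℝ → Measure X) (N A : ℝ → X → EuclideanSpace ℝ (Fin k))
    (νtv : Measure X) (Nν : X → EuclideanSpace ℝ (Fin k))
    (νstv : ℝ → Measure X) (Ns : ℝ → X → EuclideanSpace ℝ (Fin k))
    (hμfin : ∀ ε, IsFiniteMeasure (μtv ε))
    (hνfin : IsFiniteMeasure νtv)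
    (hνsfin : ∀ ε, IsFiniteMeasure (νstv ε))
    (hN1 : ∀ ε, ∀ᵐ x ∂(μtv ε), ‖N ε x‖ = 1)
    (hNν1 : ∀ᵐ x ∂νtv, ‖Nν x‖ = 1)
    (hNs1 : ∀ ε, ∀ᵐ x ∂(νstv ε), ‖Ns ε x‖ = 1)
    (hNint : ∀ ε, Integrable (N ε) (μtv ε))
    (hAint : ∀ ε, Integrable (A ε) (μtv ε))
    (hNνint : Integrable Nν νtv)
    (hNsint : ∀ ε, Integrable (Ns ε) (νstv ε))
    (hsing : ∀ ε, (νstv ε).MutuallySingular (μtv ε))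
    (hadd : ∀ ε : ℝ, ∀ S : Set X, MeasurableSet S →
      ∫ x in S, N ε x ∂(μtv ε) = (∫ x in S, N 0 x ∂(μtv 0)) + ε • ∫ x in S, Nν x ∂νtv)
    (hRN : ∀ ε : ℝ, ∀ S : Set X, MeasurableSet S →
      ∫ x in S, Nν x ∂νtv = (∫ x in S, A ε x ∂(μtv ε)) + ∫ x in S, Ns ε x ∂(νstv ε))
    : (∀ ε₁ ε₂ : ℝ, ε₁ ≠ ε₂ → (νstv ε₁).MutuallySingular (νstv ε₂)) ∧
      Set.Countable {ε : ℝ | νstv ε Set.univ ≠ 0} :=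
  singular_parts_mutually_singular_and_countable_general X k μtv N A νtv Nν νstv Ns hνfin hNν1 hNs1
    hNνint hNsint hsing hadd hRN
end

section
/- Let dμ and dν be bounded ℝ^k-valued measures on a measurable space X, dμ_ε := dμ + ε dν, with dν = A_ε |dμ_ε| + dν_s^ε, dν_s^ε ⊥ |dμ_ε|. Then: (1) for arbitrary ε₁, ε₂ ∈ ℝ, the measures |dμ_{ε₁}| + |dν_s^{ε₁}| and |dμ_{ε₂}| + |dν_s^{ε₂}| are mutually absolutely continuous; (2) if ε₁ and ε₂ are both regular, then |dμ_{ε₁}| and |dμ_{ε₂}| are mutually absolutely continuous. -/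
open MeasureTheory Filter Set

/-!
A set `S` with `|dμ_{ε₂}|(S) = |dν_s^{ε₂}|(S) = 0` is null for the vector measure `dν`, by the
Radon–Nikodym decomposition at `ε₂`; hence, by `dμ_ε = dμ + ε dν`, all `dμ_ε` agree on subsets of
`S`, so `dμ_{ε₁}` vanishes there, and then so does `dν_s^{ε₁}` by the decomposition at `ε₁`. A vector
measure `f ρ` with `f ≠ 0` `ρ`-a.e. vanishes on all subsets of `S` only if `ρ S = 0`, which brings
the vanishing back to the total variations.
-/

theorem measure_eq_zero_of_forall_setIntegral_eq_zero {X E : Type*} [MeasurableSpace X]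
    [NormedAddCommGroup E] [NormedSpace ℝ E] [CompleteSpace E] {ρ : Measure X} {f : X → E}
    (hf : Integrable f ρ) (hf0 : ∀ᵐ x ∂ρ, f x ≠ 0) {S : Set X} (hS : MeasurableSet S)
    (h : ∀ T, MeasurableSet T → T ⊆ S → ∫ x in T, f x ∂ρ = 0) : ρ S = 0 := by
  have hzero : f =ᵐ[ρ.restrict S] 0 :=
    hf.restrict.ae_eq_zero_of_forall_setIntegral_eq_zero fun T hT _ => by
      rw [Measure.restrict_restrict hT]
      exact h _ (hT.inter hS) inter_subset_right
  have hfalse : ∀ᵐ _ ∂ρ.restrict S, False := by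
    filter_upwards [hzero, ae_restrict_of_ae hf0] with x h0 h1 using h1 h0
  exact Measure.restrict_eq_zero.mp (ae_eq_bot.mp (eventually_false_iff_eq_bot.mp hfalse))

theorem add_singular_absolutelyContinuous {X E : Type*} [MeasurableSpace X]
    [NormedAddCommGroup E] [NormedSpace ℝ E] [CompleteSpace E]
    {μ νs : ℝ → Measure X} {ν : Measure X} {N A Ns : ℝ → X → E} {Nν : X → E}
    (hN : ∀ ε, ∀ᵐ x ∂μ ε, N ε x ≠ 0) (hNs : ∀ ε, ∀ᵐ x ∂νs ε, Ns ε x ≠ 0)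
    (hNint : ∀ ε, Integrable (N ε) (μ ε)) (hNsint : ∀ ε, Integrable (Ns ε) (νs ε))
    (hadd : ∀ ε : ℝ, ∀ S : Set X, MeasurableSet S →
      ∫ x in S, N ε x ∂μ ε = (∫ x in S, N 0 x ∂μ 0) + ε • ∫ x in S, Nν x ∂ν)
    (hRN : ∀ ε : ℝ, ∀ S : Set X, MeasurableSet S →
      ∫ x in S, Nν x ∂ν = (∫ x in S, A ε x ∂μ ε) + ∫ x in S, Ns ε x ∂νs ε)
    (ε₁ ε₂ : ℝ) : (μ ε₁ + νs ε₁).AbsolutelyContinuous (μ ε₂ + νs ε₂) := by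
  refine Measure.AbsolutelyContinuous.mk fun S hS hnull => ?_
  rw [Measure.add_apply, add_eq_zero] at hnull ⊢
  obtain ⟨hμ₂, hνs₂⟩ := hnull
  have hsub {ρ : Measure X} (hρ : ρ S = 0) (g : X → E) {T : Set X} (hT : T ⊆ S) :
      ∫ x in T, g x ∂ρ = 0 :=
    setIntegral_measure_zero g (measure_mono_null hT hρ)
  have hν {T : Set X} (hTm : MeasurableSet T) (hT : T ⊆ S) : ∫ x in T, Nν x ∂ν = 0 := by
    rw [hRN ε₂ T hTm, hsub hμ₂ _ hT, hsub hνs₂ _ hT, add_zero]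
  have hμ₁ : μ ε₁ S = 0 := by
    refine measure_eq_zero_of_forall_setIntegral_eq_zero (hNint ε₁) (hN ε₁) hS fun T hTm hT => ?_
    have h₂ := hadd ε₂ T hTm
    rw [hsub hμ₂ _ hT, hν hTm hT, smul_zero, add_zero] at h₂
    rw [hadd ε₁ T hTm, ← h₂, hν hTm hT, smul_zero, add_zero]
  refine ⟨hμ₁, measure_eq_zero_of_forall_setIntegral_eq_zero (hNsint ε₁) (hNs ε₁) hS
    fun T hTm hT => ?_⟩
  have h₁ := hRN ε₁ T hTm
  rwa [hsub hμ₁ _ hT, hν hTm hT, zero_add, eq_comm] at h₁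

theorem mutual_absolute_continuity_general
    (X : Type*) [MeasurableSpace X] (k : ℕ)
    (μtv : ℝ → Measure X) (N A : ℝ → X → EuclideanSpace ℝ (Fin k))
    (νtv : Measure X) (Nν : X → EuclideanSpace ℝ (Fin k))
    (νstv : ℝ → Measure X) (Ns : ℝ → X → EuclideanSpace ℝ (Fin k))
    (hN1 : ∀ ε, ∀ᵐ x ∂(μtv ε), ‖N ε x‖ = 1)
    (hNs1 : ∀ ε, ∀ᵐ x ∂(νstv ε), ‖Ns ε x‖ = 1)
    (hNint : ∀ ε, Integrable (N ε) (μtv ε))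
    (hNsint : ∀ ε, Integrable (Ns ε) (νstv ε))
    (hadd : ∀ ε : ℝ, ∀ S : Set X, MeasurableSet S →
      ∫ x in S, N ε x ∂(μtv ε) = (∫ x in S, N 0 x ∂(μtv 0)) + ε • ∫ x in S, Nν x ∂νtv)
    (hRN : ∀ ε : ℝ, ∀ S : Set X, MeasurableSet S →
      ∫ x in S, Nν x ∂νtv = (∫ x in S, A ε x ∂(μtv ε)) + ∫ x in S, Ns ε x ∂(νstv ε))
    : (∀ ε₁ ε₂ : ℝ,
        (μtv ε₁ + νstv ε₁).AbsolutelyContinuous (μtv ε₂ + νstv ε₂) ∧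
        (μtv ε₂ + νstv ε₂).AbsolutelyContinuous (μtv ε₁ + νstv ε₁)) ∧
      (∀ ε₁ ε₂ : ℝ, νstv ε₁ = 0 → νstv ε₂ = 0 →
        (μtv ε₁).AbsolutelyContinuous (μtv ε₂) ∧
        (μtv ε₂).AbsolutelyContinuous (μtv ε₁)) := by
  have hN (ε) : ∀ᵐ x ∂μtv ε, N ε x ≠ 0 :=
    (hN1 ε).mono fun x hx => norm_ne_zero_iff.mp (by simp [hx])
  have hNs (ε) : ∀ᵐ x ∂νstv ε, Ns ε x ≠ 0 :=
    (hNs1 ε).mono fun x hx => norm_ne_zero_iff.mp (by simp [hx])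
  have hac := add_singular_absolutelyContinuous hN hNs hNint hNsint hadd hRN
  refine ⟨fun ε₁ ε₂ => ⟨hac ε₁ ε₂, hac ε₂ ε₁⟩, fun ε₁ ε₂ h₁ h₂ => ?_⟩
  simpa only [h₁, h₂, add_zero] using And.intro (hac ε₁ ε₂) (hac ε₂ ε₁)

/-- **Mutual absolute continuity (Lemma 3.2).**  Setup as in Theorem B:
`dμ_ε := dμ + ε dν` with `dν = A_ε |dμ_ε| + dν_s^ε`, `dν_s^ε ⊥ |dμ_ε|`.
(1) For arbitrary `ε₁, ε₂`, the measures `|dμ_{ε₁}| + |dν_s^{ε₁}|` and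
`|dμ_{ε₂}| + |dν_s^{ε₂}|` are mutually absolutely continuous.
(2) If `ε₁` and `ε₂` are regular (`|dν_s^{ε_i}| = 0`), then `|dμ_{ε₁}|` and
`|dμ_{ε₂}|` are mutually absolutely continuous. -/
theorem mutual_absolute_continuity
    (X : Type*) [MeasurableSpace X] (k : ℕ)
    (μtv : ℝ → Measure X) (N A : ℝ → X → EuclideanSpace ℝ (Fin k))
    (νtv : Measure X) (Nν : X → EuclideanSpace ℝ (Fin k))
    (νstv : ℝ → Measure X) (Ns : ℝ → X → EuclideanSpace ℝ (Fin k))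
    (hμfin : ∀ ε, IsFiniteMeasure (μtv ε))
    (hνfin : IsFiniteMeasure νtv)
    (hνsfin : ∀ ε, IsFiniteMeasure (νstv ε))
    (hN1 : ∀ ε, ∀ᵐ x ∂(μtv ε), ‖N ε x‖ = 1)
    (hNν1 : ∀ᵐ x ∂νtv, ‖Nν x‖ = 1)
    (hNs1 : ∀ ε, ∀ᵐ x ∂(νstv ε), ‖Ns ε x‖ = 1)
    (hNint : ∀ ε, Integrable (N ε) (μtv ε))
    (hAint : ∀ ε, Integrable (A ε) (μtv ε))
    (hNνint : Integrable Nν νtv)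
    (hNsint : ∀ ε, Integrable (Ns ε) (νstv ε))
    (hsing : ∀ ε, (νstv ε).MutuallySingular (μtv ε))
    (hadd : ∀ ε : ℝ, ∀ S : Set X, MeasurableSet S →
      ∫ x in S, N ε x ∂(μtv ε) = (∫ x in S, N 0 x ∂(μtv 0)) + ε • ∫ x in S, Nν x ∂νtv)
    (hRN : ∀ ε : ℝ, ∀ S : Set X, MeasurableSet S →
      ∫ x in S, Nν x ∂νtv = (∫ x in S, A ε x ∂(μtv ε)) + ∫ x in S, Ns ε x ∂(νstv ε))
    : (∀ ε₁ ε₂ : ℝ,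
        (μtv ε₁ + νstv ε₁).AbsolutelyContinuous (μtv ε₂ + νstv ε₂) ∧
        (μtv ε₂ + νstv ε₂).AbsolutelyContinuous (μtv ε₁ + νstv ε₁)) ∧
      (∀ ε₁ ε₂ : ℝ, νstv ε₁ = 0 → νstv ε₂ = 0 →
        (μtv ε₁).AbsolutelyContinuous (μtv ε₂) ∧
        (μtv ε₂).AbsolutelyContinuous (μtv ε₁)) :=
  mutual_absolute_continuity_general X k μtv N A νtv Nν νstv Ns hN1 hNs1 hNint hNsint hadd hRN
end

section
/- Let dμ and dν be bounded ℝ^k-valued measures on a measurable space X, dμ_ε := dμ + ε dν, with decompositions dμ_ε = N_ε |dμ_ε| and dν = A_ε |dμ_ε| + dν_s^ε, dν_s^ε ⊥ |dμ_ε|. If ε₁ and ε₂ are both regular (|dν_s^{ε₁}| = |dν_s^{ε₂}| = 0), then (ε₂ − ε₁) A_{ε₁} + N_{ε₁} ≠ 0 almost everywhere with respect to |dμ_{ε₁}| (and hence also almost everywhere with respect to |dμ_{ε₂}|). -/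
open MeasureTheory Filter Set Topology
open scoped ENNReal NNReal InnerProductSpace

private lemma key_null {X : Type*} [MeasurableSpace X] {k : ℕ}
    {m : Measure X} [IsFiniteMeasure m] {g : X → EuclideanSpace ℝ (Fin k)}
    (hint : Integrable g m) (h1 : ∀ᵐ x ∂m, ‖g x‖ = 1)
    {S : Set X} (hS : MeasurableSet S)
    (hzero : ∀ T : Set X, MeasurableSet T → T ⊆ S → ∫ x in T, g x ∂m = 0) :
    m S = 0 := by
  have hgz : g =ᵐ[m.restrict S] 0 := by
    apply Integrable.ae_eq_zero_of_forall_setIntegral_eq_zero (hint.restrict)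
    intro T hT _
    rw [Measure.restrict_restrict hT]
    exact hzero (T ∩ S) (hT.inter hS) inter_subset_right
  have h1' : ∀ᵐ x ∂m.restrict S, ‖g x‖ = 1 := ae_restrict_of_ae h1
  have hFalse : ∀ᵐ x ∂m.restrict S, False := by
    filter_upwards [hgz, h1'] with x hx hx'
    rw [hx] at hx'
    simp at hx'
  have : m.restrict S Set.univ = 0 := by
    have := ae_iff.mp hFalse
    simpa using this
  simpa [Measure.restrict_apply_univ] using this

/-- **Lemma 4.1.**  Setup as in Theorem B: `dμ_ε = N_ε |dμ_ε|`, `dμ_ε := dμ + ε dν`,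
`dν = A_ε |dμ_ε| + dν_s^ε` with `dν_s^ε ⊥ |dμ_ε|`.  If `ε₁` and `ε₂` are both regular
(`|dν_s^{ε₁}| = |dν_s^{ε₂}| = 0`), then `(ε₂ − ε₁) A_{ε₁} + N_{ε₁} ≠ 0`
a.e. `[|dμ_{ε₁}|]`, and hence also a.e. `[|dμ_{ε₂}|]`. -/
theorem nonvanishing_of_shifted_density
    (X : Type*) [MeasurableSpace X] (k : ℕ)
    (μtv : ℝ → Measure X) (N A : ℝ → X → EuclideanSpace ℝ (Fin k))
    (νtv : Measure X) (Nν : X → EuclideanSpace ℝ (Fin k))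
    (νstv : ℝ → Measure X) (Ns : ℝ → X → EuclideanSpace ℝ (Fin k))
    (hμfin : ∀ ε, IsFiniteMeasure (μtv ε))
    (hνfin : IsFiniteMeasure νtv)
    (hνsfin : ∀ ε, IsFiniteMeasure (νstv ε))
    (hN1 : ∀ ε, ∀ᵐ x ∂(μtv ε), ‖N ε x‖ = 1)
    (hNν1 : ∀ᵐ x ∂νtv, ‖Nν x‖ = 1)
    (hNs1 : ∀ ε, ∀ᵐ x ∂(νstv ε), ‖Ns ε x‖ = 1)
    (hNint : ∀ ε, Integrable (N ε) (μtv ε))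
    (hAint : ∀ ε, Integrable (A ε) (μtv ε))
    (hNνint : Integrable Nν νtv)
    (hNsint : ∀ ε, Integrable (Ns ε) (νstv ε))
    (hsing : ∀ ε, (νstv ε).MutuallySingular (μtv ε))
    (hadd : ∀ ε : ℝ, ∀ S : Set X, MeasurableSet S →
      ∫ x in S, N ε x ∂(μtv ε) = (∫ x in S, N 0 x ∂(μtv 0)) + ε • ∫ x in S, Nν x ∂νtv)
    (hRN : ∀ ε : ℝ, ∀ S : Set X, MeasurableSet S →
      ∫ x in S, Nν x ∂νtv = (∫ x in S, A ε x ∂(μtv ε)) + ∫ x in S, Ns ε x ∂(νstv ε))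
    (ε₁ ε₂ : ℝ) (hreg₁ : νstv ε₁ = 0) (hreg₂ : νstv ε₂ = 0) :
    (∀ᵐ x ∂(μtv ε₁), (ε₂ - ε₁) • A ε₁ x + N ε₁ x ≠ 0) ∧
    (∀ᵐ x ∂(μtv ε₂), (ε₂ - ε₁) • A ε₁ x + N ε₁ x ≠ 0) := by
  have := hμfin ε₁
  have := hμfin ε₂
  set f : X → EuclideanSpace ℝ (Fin k) := fun x => (ε₂ - ε₁) • A ε₁ x + N ε₁ x with hf
  have hfint : Integrable f (μtv ε₁) := ((hAint ε₁).smul (ε₂ - ε₁)).add (hNint ε₁)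
  -- dν = A ε₁ dμ_{ε₁} and dν = A ε₂ dμ_{ε₂} on sets
  have hRN1 : ∀ S : Set X, MeasurableSet S →
      ∫ x in S, Nν x ∂νtv = ∫ x in S, A ε₁ x ∂(μtv ε₁) := by
    intro S hS
    have := hRN ε₁ S hS
    simpa [hreg₁] using this
  have hRN2 : ∀ S : Set X, MeasurableSet S →
      ∫ x in S, Nν x ∂νtv = ∫ x in S, A ε₂ x ∂(μtv ε₂) := by
    intro S hS
    have := hRN ε₂ S hS
    simpa [hreg₂] using this
  -- key identity: ∫_S N ε₂ dμ_{ε₂} = ∫_S f dμ_{ε₁}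
  have hkey : ∀ S : Set X, MeasurableSet S →
      ∫ x in S, N ε₂ x ∂(μtv ε₂) = ∫ x in S, f x ∂(μtv ε₁) := by
    intro S hS
    have h1 := hadd ε₁ S hS
    have h2 := hadd ε₂ S hS
    have hsum : ∫ x in S, f x ∂(μtv ε₁)
        = (ε₂ - ε₁) • ∫ x in S, A ε₁ x ∂(μtv ε₁) + ∫ x in S, N ε₁ x ∂(μtv ε₁) := by
      have h3 := integral_add (μ := (μtv ε₁).restrict S)
        (f := fun x => (ε₂ - ε₁) • A ε₁ x) (g := N ε₁)
        (((hAint ε₁).smul (ε₂ - ε₁)).integrableOn) ((hNint ε₁).integrableOn)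
      rw [integral_smul] at h3
      exact h3
    rw [hsum, ← hRN1 S hS, h1, h2]
    module
  -- first conclusion
  have hAm := (hAint ε₁).1
  have hNm := (hNint ε₁).1
  have hfm : AEStronglyMeasurable f (μtv ε₁) := (hAm.const_smul (ε₂ - ε₁)).add hNm
  set f' := hfm.mk f with hf'
  have hff' : f =ᵐ[μtv ε₁] f' := hfm.ae_eq_mk
  have hf'meas : Measurable f' := hfm.stronglyMeasurable_mk.measurable
  set S : Set X := f' ⁻¹' {0} with hSdef
  have hS : MeasurableSet S := hf'meas (measurableSet_singleton 0)
  -- on subsets of any μ_{ε₁}-null-modification-zero set, ∫ f dμ₁ = 0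
  have hfzero : ∀ T : Set X, MeasurableSet T → T ⊆ S → ∫ x in T, f x ∂(μtv ε₁) = 0 := by
    intro T hT hTS
    have : ∫ x in T, f x ∂(μtv ε₁) = ∫ x in T, f' x ∂(μtv ε₁) :=
      integral_congr_ae (ae_restrict_of_ae hff')
    rw [this]
    have hzero : ∀ x ∈ T, f' x = 0 := fun x hx => hTS hx
    calc ∫ x in T, f' x ∂(μtv ε₁) = ∫ x in T, (0 : EuclideanSpace ℝ (Fin k)) ∂(μtv ε₁) :=
          setIntegral_congr_fun hT hzero
      _ = 0 := integral_zero _ _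
  -- μ_{ε₂}(S) = 0
  have hSIZ : ∀ (g : X → EuclideanSpace ℝ (Fin k)) (m : Measure X) (T : Set X),
      m T = 0 → ∫ x in T, g x ∂m = 0 := by
    intro g m T h
    rw [Measure.restrict_eq_zero.2 h]
    exact integral_zero_measure _
  have hμ2S : μtv ε₂ S = 0 := by
    apply key_null (hNint ε₂) (hN1 ε₂) hS
    intro T hT hTS
    rw [hkey T hT]
    exact hfzero T hT hTS
  -- so ν and hence μ_{ε₁} vanish on subsets of S
  have hN1zero : ∀ T : Set X, MeasurableSet T → T ⊆ S → ∫ x in T, N ε₁ x ∂(μtv ε₁) = 0 := by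
    intro T hT hTS
    have hμ2T : μtv ε₂ T = 0 := measure_mono_null hTS hμ2S
    have hνT : ∫ x in T, Nν x ∂νtv = 0 := by
      rw [hRN2 T hT]
      exact hSIZ _ _ _ hμ2T
    have hN2T : ∫ x in T, N ε₂ x ∂(μtv ε₂) = 0 := hSIZ _ _ _ hμ2T
    have h1 := hadd ε₁ T hT
    have h2 := hadd ε₂ T hT
    rw [hN2T, hνT] at h2
    rw [h1, hνT]
    rw [smul_zero, add_zero] at h2 ⊢
    exact h2.symm
  have hμ1S : μtv ε₁ S = 0 := key_null (hNint ε₁) (hN1 ε₁) hS hN1zero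
  have hpart1 : ∀ᵐ x ∂(μtv ε₁), f x ≠ 0 := by
    have haeS : ∀ᵐ x ∂(μtv ε₁), x ∉ S := by
      rw [ae_iff]
      simpa using hμ1S
    filter_upwards [haeS, hff'] with x hx hx'
    intro h
    exact hx (by simpa [hSdef, ← hx'] using h)
  -- absolute continuity μ_{ε₂} ≪ μ_{ε₁}
  have hac : μtv ε₂ ≪ μtv ε₁ := by
    apply Measure.AbsolutelyContinuous.mk
    intro T hT hTnull
    apply key_null (hNint ε₂) (hN1 ε₂) hT
    intro T' hT' hT'T
    rw [hkey T' hT']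
    exact hSIZ _ _ _ (measure_mono_null hT'T hTnull)
  exact ⟨hpart1, hac.ae_le hpart1⟩
end

section
/- Let dμ and dν be bounded ℝ^k-valued measures on a measurable space X, dμ_ε := dμ + ε dν, with decompositions dμ_ε = N_ε |dμ_ε| and dν = A_ε |dμ_ε| + dν_s^ε (dν_s^ε ⊥ |dμ_ε|), and F(ε) := ∫_X |dμ_ε|. If ε₁ < ε₂ are both regular, then F'(ε₂) − F'(ε₁) = ∫_X (1/(2(ε₂ − ε₁))) |N_{ε₂} − N_{ε₁}|² ( |dμ_{ε₂}| + |dμ_{ε₁}| ) ≥ 0. -/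
/-!
Regularity of `ε₁` and `ε₂` makes `dν`, and hence every `|dμ_ε|`, absolutely continuous with
respect to `ρ := |dμ_{ε₁}|`, and makes `|dμ_{ε₁}|`, `|dμ_{ε₂}|` mutually absolutely continuous.
With `f_ε`, `g` the `ρ`-densities of `dμ_ε`, `dν`, we get `F(ε) = ∫ ‖f_{ε₀} + (ε - ε₀) g‖ dρ`.
This is convex in `ε` with subgradient `∫ ⟪f_{ε₀} / ‖f_{ε₀}‖, g⟫ dρ` at `ε₀`, which is therefore
`F'(ε₀)` wherever `F` is differentiable. Writing `f_{ε_i} = r_i N_{ε_i}` with `r_i > 0` and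
`(ε₂ - ε₁) g = f_{ε₂} - f_{ε₁}`, the difference of derivatives becomes
`(ε₂ - ε₁)⁻¹ ∫ ⟪N₂ - N₁, r₂ N₂ - r₁ N₁⟫ dρ = (ε₂ - ε₁)⁻¹ ∫ (r₁ + r₂) ‖N₂ - N₁‖² / 2 dρ`.
-/

open MeasureTheory Filter Set
open scoped InnerProductSpace
open NormedSpace (normalize)

lemma norm_normalize_le_one {V : Type*} [NormedAddCommGroup V] [NormedSpace ℝ V] (v : V) :
    ‖normalize v‖ ≤ 1 := by
  by_cases hv : v = 0
  · simp [hv, NormedSpace.normalize_zero_eq_zero]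
  · exact (NormedSpace.norm_normalize_eq_one_iff.mpr hv).le

section InnerProduct

variable {E : Type*} [NormedAddCommGroup E] [InnerProductSpace ℝ E]

lemma real_inner_normalize_self (v : E) : ⟪normalize v, v⟫_ℝ = ‖v‖ := by
  by_cases hv : v = 0
  · simp [hv, NormedSpace.normalize_zero_eq_zero]
  · rw [NormedSpace.normalize, real_inner_smul_left, real_inner_self_eq_norm_sq]
    field_simp

lemma norm_add_inner_normalize_le_norm_add (v w : E) : ‖v‖ + ⟪normalize v, w⟫_ℝ ≤ ‖v + w‖ :=
  calc ‖v‖ + ⟪normalize v, w⟫_ℝ = ⟪normalize v, v + w⟫_ℝ := by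
        rw [inner_add_right, real_inner_normalize_self]
    _ ≤ ‖normalize v‖ * ‖v + w‖ := real_inner_le_norm _ _
    _ ≤ ‖v + w‖ := mul_le_of_le_one_left (norm_nonneg _) (norm_normalize_le_one v)

lemma real_inner_sub_smul_sub_smul_of_norm_eq_one {u₁ u₂ : E} (hu₁ : ‖u₁‖ = 1) (hu₂ : ‖u₂‖ = 1)
    (r₁ r₂ : ℝ) : ⟪u₂ - u₁, r₂ • u₂ - r₁ • u₁⟫_ℝ = (r₁ + r₂) * ‖u₂ - u₁‖ ^ 2 / 2 := by
  rw [norm_sub_sq_real, hu₁, hu₂]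
  simp only [inner_sub_left, inner_sub_right, real_inner_smul_right, real_inner_self_eq_norm_sq,
    hu₁, hu₂, real_inner_comm u₁ u₂]
  ring

end InnerProduct

lemma HasDerivAt.eq_of_forall_add_mul_le {f : ℝ → ℝ} {f' L x₀ : ℝ} (hf : HasDerivAt f f' x₀)
    (hL : ∀ x, f x₀ + (x - x₀) * L ≤ f x) : f' = L := by
  have hmin : IsLocalMin (fun x => f x - (x - x₀) * L) x₀ :=
    Eventually.of_forall fun x => by simp only [sub_self, zero_mul, sub_zero]; linarith [hL x]
  have hderiv : HasDerivAt (fun x => f x - (x - x₀) * L) (f' - 1 * L) x₀ :=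
    hf.sub (((hasDerivAt_id x₀).sub_const x₀).mul_const L)
  linarith [hmin.hasDerivAt_eq_zero hderiv]

section RadonNikodym

variable {X E : Type*} [MeasurableSpace X] [NormedAddCommGroup E] [NormedSpace ℝ E]

lemma Measure.absolutelyContinuous_of_setIntegral_eq_zero [CompleteSpace E] {μ ρ : Measure X}
    [SigmaFinite μ] {N : X → E} (hN : ∀ᵐ x ∂μ, N x ≠ 0) (hNi : Integrable N μ)
    (h : ∀ S, MeasurableSet S → ρ S = 0 → ∫ x in S, N x ∂μ = 0) : μ ≪ ρ := by
  refine Measure.AbsolutelyContinuous.mk fun S hS hρS => ?_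
  have hN0 : N =ᵐ[μ.restrict S] 0 := by
    refine ae_eq_zero_of_forall_setIntegral_eq_of_sigmaFinite
      (fun T _ _ => hNi.restrict.restrict) fun T hT _ => ?_
    rw [Measure.restrict_restrict hT]
    exact h _ (hT.inter hS) (measure_mono_null inter_subset_right hρS)
  have hfalse : ∀ᵐ _ ∂μ.restrict S, False := by
    filter_upwards [ae_restrict_of_ae hN, hN0] with x hx hx0 using hx hx0
  exact Measure.restrict_eq_zero.mp (ae_eq_bot.mp (eventually_false_iff_eq_bot.mp hfalse))

lemma integral_add_measure_eq_integral_rnDeriv_mul {μ₁ μ₂ ρ : Measure X} [IsFiniteMeasure μ₁]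
    [IsFiniteMeasure μ₂] [SigmaFinite ρ] (h₁ : μ₁ ≪ ρ) (h₂ : μ₂ ≪ ρ) (φ : X → ℝ) :
    ∫ x, φ x ∂(μ₁ + μ₂) =
      ∫ x, ((μ₁.rnDeriv ρ x).toReal + (μ₂.rnDeriv ρ x).toReal) * φ x ∂ρ := by
  rw [← integral_toReal_rnDeriv_mul (h₁.add_left h₂)]
  apply integral_congr_ae
  filter_upwards [Measure.rnDeriv_add μ₁ μ₂ ρ, Measure.rnDeriv_lt_top μ₁ ρ,
    Measure.rnDeriv_lt_top μ₂ ρ] with x hx h₁x h₂x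
  rw [hx, Pi.add_apply, ENNReal.toReal_add h₁x.ne h₂x.ne]

noncomputable def rnDerivSMul (μ ρ : Measure X) (N : X → E) (x : X) : E :=
  (μ.rnDeriv ρ x).toReal • N x

variable {μ μ₀ ν ρ : Measure X} {N N₀ Nν : X → E} {c : ℝ}

lemma integrable_rnDerivSMul [SigmaFinite μ] [SigmaFinite ρ] (hμρ : μ ≪ ρ)
    (hN : Integrable N μ) : Integrable (rnDerivSMul μ ρ N) ρ :=
  (integrable_rnDeriv_smul_iff hμρ).mpr hN

lemma setIntegral_rnDerivSMul [SigmaFinite μ] [SigmaFinite ρ] (hμρ : μ ≪ ρ) {S : Set X}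
    (hS : MeasurableSet S) : ∫ x in S, rnDerivSMul μ ρ N x ∂ρ = ∫ x in S, N x ∂μ :=
  setIntegral_rnDeriv_smul hμρ hS

lemma toReal_measure_univ_eq_integral_norm_rnDerivSMul [IsFiniteMeasure μ] [SigmaFinite ρ]
    (hμρ : μ ≪ ρ) (hN : ∀ᵐ x ∂μ, ‖N x‖ = 1) :
    (μ univ).toReal = ∫ x, ‖rnDerivSMul μ ρ N x‖ ∂ρ :=
  calc (μ univ).toReal = ∫ x, ‖N x‖ ∂μ := by simp [integral_congr_ae hN, measureReal_def]
    _ = ∫ x, (μ.rnDeriv ρ x).toReal • ‖N x‖ ∂ρ := (integral_rnDeriv_smul hμρ).symm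
    _ = ∫ x, ‖rnDerivSMul μ ρ N x‖ ∂ρ := by
        simp only [rnDerivSMul, norm_smul, Real.norm_of_nonneg ENNReal.toReal_nonneg, smul_eq_mul]

lemma rnDerivSMul_ae_eq_add_smul [CompleteSpace E] [SigmaFinite μ] [SigmaFinite μ₀]
    [SigmaFinite ν] [SigmaFinite ρ]
    (h : ∀ S, MeasurableSet S → ∫ x in S, N x ∂μ = (∫ x in S, N₀ x ∂μ₀) + c • ∫ x in S, Nν x ∂ν)
    (hNi : Integrable N μ) (hN₀i : Integrable N₀ μ₀) (hNνi : Integrable Nν ν)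
    (hμρ : μ ≪ ρ) (hμ₀ρ : μ₀ ≪ ρ) (hνρ : ν ≪ ρ) :
    rnDerivSMul μ ρ N =ᵐ[ρ] fun x => rnDerivSMul μ₀ ρ N₀ x + c • rnDerivSMul ν ρ Nν x := by
  have hN₀' := integrable_rnDerivSMul hμ₀ρ hN₀i
  have hNν' : Integrable (fun x => c • rnDerivSMul ν ρ Nν x) ρ :=
    (integrable_rnDerivSMul hνρ hNνi).smul c
  refine ae_eq_of_forall_setIntegral_eq_of_sigmaFinite
    (fun S _ _ => (integrable_rnDerivSMul hμρ hNi).integrableOn)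
    (fun S _ _ => (hN₀'.add hNν').integrableOn) fun S hS _ => ?_
  rw [integral_add hN₀'.integrableOn hNν'.integrableOn, integral_smul,
    setIntegral_rnDerivSMul hμρ hS, setIntegral_rnDerivSMul hμ₀ρ hS,
    setIntegral_rnDerivSMul hνρ hS, h S hS]

lemma absolutelyContinuous_of_setIntegral_eq_add_smul [CompleteSpace E] [SigmaFinite μ]
    (h : ∀ S, MeasurableSet S → ∫ x in S, N x ∂μ = (∫ x in S, N₀ x ∂μ₀) + c • ∫ x in S, Nν x ∂ν)
    (hN : ∀ᵐ x ∂μ, N x ≠ 0) (hNi : Integrable N μ) (hμ₀ρ : μ₀ ≪ ρ) (hνρ : ν ≪ ρ) : μ ≪ ρ :=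
  Measure.absolutelyContinuous_of_setIntegral_eq_zero hN hNi fun S hS hρS => by
    rw [h S hS, setIntegral_measure_zero _ (hμ₀ρ hρS), setIntegral_measure_zero _ (hνρ hρS),
      smul_zero, add_zero]

end RadonNikodym

section TotalVariation

variable {X E : Type*} [MeasurableSpace X] [NormedAddCommGroup E] [InnerProductSpace ℝ E]

lemma Integrable.inner_normalize {ρ : Measure X} {a b : X → E} (ha : AEStronglyMeasurable a ρ)
    (hb : Integrable b ρ) : Integrable (fun x => ⟪normalize (a x), b x⟫_ℝ) ρ := by
  refine hb.norm.mono ((ha.norm.aemeasurable.inv.aestronglyMeasurable.smul ha).inner hb.1)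
    (Eventually.of_forall fun x => ?_)
  rw [norm_norm, Real.norm_eq_abs]
  exact (abs_real_inner_le_norm _ _).trans
    (mul_le_of_le_one_left (norm_nonneg _) (norm_normalize_le_one _))

lemma HasDerivAt.eq_integral_inner_normalize {ρ : Measure X} {a b : X → E}
    (ha : Integrable a ρ) (hb : Integrable b ρ) {t₀ D : ℝ}
    (hD : HasDerivAt (fun t => ∫ x, ‖a x + (t - t₀) • b x‖ ∂ρ) D t₀) :
    D = ∫ x, ⟪normalize (a x), b x⟫_ℝ ∂ρ := by
  refine hD.eq_of_forall_add_mul_le fun t => ?_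
  have hab : Integrable (fun x => ⟪normalize (a x), b x⟫_ℝ) ρ := Integrable.inner_normalize ha.1 hb
  calc (∫ x, ‖a x + (t₀ - t₀) • b x‖ ∂ρ) + (t - t₀) * ∫ x, ⟪normalize (a x), b x⟫_ℝ ∂ρ
      = ∫ x, (‖a x‖ + ⟪normalize (a x), (t - t₀) • b x⟫_ℝ) ∂ρ := by
        simp only [sub_self, zero_smul, add_zero, real_inner_smul_right]
        rw [integral_add ha.norm (hab.const_mul _), integral_const_mul]
    _ ≤ ∫ x, ‖a x + (t - t₀) • b x‖ ∂ρ :=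
        integral_mono (ha.norm.add (hab.const_mul (t - t₀) |>.congr
          (Eventually.of_forall fun x => by simp only [real_inner_smul_right])))
          (ha.add (hb.smul (t - t₀))).norm
          fun x => norm_add_inner_normalize_le_norm_add _ _

variable [CompleteSpace E]

lemma HasDerivAt.eq_integral_inner_normalize_rnDerivSMul {μ : ℝ → Measure X} {N : ℝ → X → E}
    {ν ρ : Measure X} {Nν : X → E} [∀ ε, IsFiniteMeasure (μ ε)] [IsFiniteMeasure ν]
    [SigmaFinite ρ]
    (hshift : ∀ ε ε₀ S, MeasurableSet S →
      ∫ x in S, N ε x ∂μ ε = (∫ x in S, N ε₀ x ∂μ ε₀) + (ε - ε₀) • ∫ x in S, Nν x ∂ν)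
    (hN : ∀ ε, ∀ᵐ x ∂μ ε, ‖N ε x‖ = 1) (hNi : ∀ ε, Integrable (N ε) (μ ε))
    (hNνi : Integrable Nν ν) (hμρ : ∀ ε, μ ε ≪ ρ) (hνρ : ν ≪ ρ) {ε₀ D : ℝ}
    (hD : HasDerivAt (fun ε => (μ ε univ).toReal) D ε₀) :
    D = ∫ x, ⟪normalize (rnDerivSMul (μ ε₀) ρ (N ε₀) x), rnDerivSMul ν ρ Nν x⟫_ℝ ∂ρ := by
  have hF : (fun ε => (μ ε univ).toReal) = fun ε =>
      ∫ x, ‖rnDerivSMul (μ ε₀) ρ (N ε₀) x + (ε - ε₀) • rnDerivSMul ν ρ Nν x‖ ∂ρ := by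
    funext ε
    rw [toReal_measure_univ_eq_integral_norm_rnDerivSMul (hμρ ε) (hN ε)]
    refine integral_congr_ae ?_
    filter_upwards [rnDerivSMul_ae_eq_add_smul (hshift ε ε₀) (hNi ε) (hNi ε₀) hNνi (hμρ ε)
      (hμρ ε₀) hνρ] with x hx
    rw [hx]
  rw [hF] at hD
  exact hD.eq_integral_inner_normalize (integrable_rnDerivSMul (hμρ ε₀) (hNi ε₀))
    (integrable_rnDerivSMul hνρ hNνi)

lemma integral_inner_normalize_rnDerivSMul_sub {μ₁ μ₂ ν : Measure X} [IsFiniteMeasure μ₁]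
    [IsFiniteMeasure μ₂] [IsFiniteMeasure ν] {N₁ N₂ Nν : X → E} {c : ℝ} (hc : c ≠ 0)
    (h : ∀ S, MeasurableSet S →
      ∫ x in S, N₂ x ∂μ₂ = (∫ x in S, N₁ x ∂μ₁) + c • ∫ x in S, Nν x ∂ν)
    (h₂₁ : μ₂ ≪ μ₁) (h₁₂ : μ₁ ≪ μ₂) (hν : ν ≪ μ₁)
    (hN₁ : ∀ᵐ x ∂μ₁, ‖N₁ x‖ = 1) (hN₂ : ∀ᵐ x ∂μ₂, ‖N₂ x‖ = 1)
    (hN₁i : Integrable N₁ μ₁) (hN₂i : Integrable N₂ μ₂) (hNνi : Integrable Nν ν) :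
    (∫ x, ⟪normalize (rnDerivSMul μ₂ μ₁ N₂ x), rnDerivSMul ν μ₁ Nν x⟫_ℝ ∂μ₁) -
        ∫ x, ⟪normalize (rnDerivSMul μ₁ μ₁ N₁ x), rnDerivSMul ν μ₁ Nν x⟫_ℝ ∂μ₁ =
      ∫ x, (1 / (2 * c)) * ‖N₂ x - N₁ x‖ ^ 2 ∂(μ₂ + μ₁) := by
  have hg := integrable_rnDerivSMul hν hNνi
  rw [← integral_sub (Integrable.inner_normalize (integrable_rnDerivSMul h₂₁ hN₂i).1 hg)
      (Integrable.inner_normalize (integrable_rnDerivSMul .rfl hN₁i).1 hg),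
    integral_add_measure_eq_integral_rnDeriv_mul h₂₁ .rfl]
  refine integral_congr_ae ?_
  have hr₁ : ∀ᵐ x ∂μ₁, 0 < (μ₁.rnDeriv μ₁ x).toReal := by
    filter_upwards [Measure.rnDeriv_pos .rfl, Measure.rnDeriv_lt_top μ₁ μ₁] with x h0 htop
    exact ENNReal.toReal_pos h0.ne' htop.ne
  have hr₂ : ∀ᵐ x ∂μ₁, 0 < (μ₂.rnDeriv μ₁ x).toReal := by
    filter_upwards [Measure.rnDeriv_pos' h₁₂, Measure.rnDeriv_lt_top μ₂ μ₁] with x h0 htop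
    exact ENNReal.toReal_pos h0.ne' htop.ne
  filter_upwards [rnDerivSMul_ae_eq_add_smul h hN₂i hN₁i hNνi h₂₁ .rfl hν, hr₁, hr₂, hN₁,
    h₁₂.ae_le hN₂] with x hx hr₁x hr₂x hN₁x hN₂x
  have hgx : rnDerivSMul ν μ₁ Nν x =
      c⁻¹ • (rnDerivSMul μ₂ μ₁ N₂ x - rnDerivSMul μ₁ μ₁ N₁ x) := by
    rw [hx, add_sub_cancel_left, smul_smul, inv_mul_cancel₀ hc, one_smul]
  simp only [rnDerivSMul] at hgx ⊢
  rw [hgx, ← inner_sub_left, NormedSpace.normalize_smul_of_pos hr₁x,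
    NormedSpace.normalize_smul_of_pos hr₂x, NormedSpace.normalize_eq_self_of_norm_eq_one hN₁x,
    NormedSpace.normalize_eq_self_of_norm_eq_one hN₂x, real_inner_smul_right,
    real_inner_sub_smul_sub_smul_of_norm_eq_one hN₁x hN₂x]
  field_simp
  ring

end TotalVariation

theorem derivative_difference_formula_general
    (X : Type*) [MeasurableSpace X] (k : ℕ)
    (μtv : ℝ → Measure X) (N A : ℝ → X → EuclideanSpace ℝ (Fin k))
    (νtv : Measure X) (Nν : X → EuclideanSpace ℝ (Fin k))
    (νstv : ℝ → Measure X) (Ns : ℝ → X → EuclideanSpace ℝ (Fin k))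
    (hμfin : ∀ ε, IsFiniteMeasure (μtv ε))
    (hνfin : IsFiniteMeasure νtv)
    (hN1 : ∀ ε, ∀ᵐ x ∂(μtv ε), ‖N ε x‖ = 1)
    (hNν1 : ∀ᵐ x ∂νtv, ‖Nν x‖ = 1)
    (hNint : ∀ ε, Integrable (N ε) (μtv ε))
    (hNνint : Integrable Nν νtv)
    (hadd : ∀ ε : ℝ, ∀ S : Set X, MeasurableSet S →
      ∫ x in S, N ε x ∂(μtv ε) = (∫ x in S, N 0 x ∂(μtv 0)) + ε • ∫ x in S, Nν x ∂νtv)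
    (hRN : ∀ ε : ℝ, ∀ S : Set X, MeasurableSet S →
      ∫ x in S, Nν x ∂νtv = (∫ x in S, A ε x ∂(μtv ε)) + ∫ x in S, Ns ε x ∂(νstv ε))
    (F' : ℝ → ℝ)
    (hF' : ∀ ε : ℝ, νstv ε = 0 →
      HasDerivAt (fun e : ℝ => (μtv e Set.univ).toReal) (F' ε) ε)
    (ε₁ ε₂ : ℝ) (hlt : ε₁ < ε₂) (hreg₁ : νstv ε₁ = 0) (hreg₂ : νstv ε₂ = 0) :
    F' ε₂ - F' ε₁ =
      ∫ x, (1 / (2 * (ε₂ - ε₁))) * ‖N ε₂ x - N ε₁ x‖ ^ 2 ∂(μtv ε₂ + μtv ε₁) ∧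
    0 ≤ F' ε₂ - F' ε₁ := by
  have := hμfin
  have hshift : ∀ ε ε₀ S, MeasurableSet S → ∫ x in S, N ε x ∂μtv ε =
      (∫ x in S, N ε₀ x ∂μtv ε₀) + (ε - ε₀) • ∫ x in S, Nν x ∂νtv := fun ε ε₀ S hS => by
    rw [hadd ε S hS, hadd ε₀ S hS, sub_smul]
    abel
  have hN0 : ∀ ε, ∀ᵐ x ∂μtv ε, N ε x ≠ 0 := fun ε =>
    (hN1 ε).mono fun x hx => norm_ne_zero_iff.mp (hx ▸ one_ne_zero)
  have hνμ : ∀ ε, νstv ε = 0 → νtv ≪ μtv ε := fun ε hε =>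
    Measure.absolutelyContinuous_of_setIntegral_eq_zero
      (hNν1.mono fun x hx => norm_ne_zero_iff.mp (hx ▸ one_ne_zero)) hNνint fun S hS h0 => by
        rw [hRN ε S hS, hε, setIntegral_measure_zero _ h0, Measure.restrict_zero,
          integral_zero_measure, add_zero]
  have hμμ : ∀ ε ε₀, νstv ε₀ = 0 → μtv ε ≪ μtv ε₀ := fun ε ε₀ hε₀ =>
    absolutelyContinuous_of_setIntegral_eq_add_smul (hshift ε ε₀) (hN0 ε) (hNint ε) .rfl
      (hνμ ε₀ hε₀)
  have hD : ∀ ε, νstv ε = 0 → F' ε = ∫ x, ⟪normalize (rnDerivSMul (μtv ε) (μtv ε₁) (N ε) x),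
      rnDerivSMul νtv (μtv ε₁) Nν x⟫_ℝ ∂μtv ε₁ := fun ε hε =>
    (hF' ε hε).eq_integral_inner_normalize_rnDerivSMul hshift hN1 hNint hNνint
      (fun e => hμμ e ε₁ hreg₁) (hνμ ε₁ hreg₁)
  have hformula : F' ε₂ - F' ε₁ =
      ∫ x, (1 / (2 * (ε₂ - ε₁))) * ‖N ε₂ x - N ε₁ x‖ ^ 2 ∂(μtv ε₂ + μtv ε₁) := by
    rw [hD ε₂ hreg₂, hD ε₁ hreg₁]
    exact integral_inner_normalize_rnDerivSMul_sub (sub_ne_zero.mpr hlt.ne') (hshift ε₂ ε₁)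
      (hμμ ε₂ ε₁ hreg₁) (hμμ ε₁ ε₂ hreg₂) (hνμ ε₁ hreg₁) (hN1 ε₁) (hN1 ε₂) (hNint ε₁)
      (hNint ε₂) hNνint
  have hΔ : 0 < ε₂ - ε₁ := sub_pos.mpr hlt
  exact ⟨hformula, hformula ▸ integral_nonneg fun x => by positivity⟩

/-- **Formula (3.11.0): difference of first derivatives between regular values.**
Setup as in Theorem B: `dμ_ε = N_ε |dμ_ε|`, `dμ_ε := dμ + ε dν`,
`dν = A_ε |dμ_ε| + dν_s^ε` with `dν_s^ε ⊥ |dμ_ε|`, `F(ε) = ∫_X |dμ_ε|`, and for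
regular `ε` (i.e. `|dν_s^ε| = 0`) `F` is differentiable at `ε` with derivative
`F'(ε)`.  If `ε₁ < ε₂` are both regular, then
`F'(ε₂) − F'(ε₁) = ∫_X (2(ε₂−ε₁))⁻¹ |N_{ε₂} − N_{ε₁}|² (|dμ_{ε₂}| + |dμ_{ε₁}|) ≥ 0`. -/
theorem derivative_difference_formula
    (X : Type*) [MeasurableSpace X] (k : ℕ)
    (μtv : ℝ → Measure X) (N A : ℝ → X → EuclideanSpace ℝ (Fin k))
    (νtv : Measure X) (Nν : X → EuclideanSpace ℝ (Fin k))
    (νstv : ℝ → Measure X) (Ns : ℝ → X → EuclideanSpace ℝ (Fin k))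
    (hμfin : ∀ ε, IsFiniteMeasure (μtv ε))
    (hνfin : IsFiniteMeasure νtv)
    (hνsfin : ∀ ε, IsFiniteMeasure (νstv ε))
    (hN1 : ∀ ε, ∀ᵐ x ∂(μtv ε), ‖N ε x‖ = 1)
    (hNν1 : ∀ᵐ x ∂νtv, ‖Nν x‖ = 1)
    (hNs1 : ∀ ε, ∀ᵐ x ∂(νstv ε), ‖Ns ε x‖ = 1)
    (hNint : ∀ ε, Integrable (N ε) (μtv ε))
    (hAint : ∀ ε, Integrable (A ε) (μtv ε))
    (hNνint : Integrable Nν νtv)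
    (hNsint : ∀ ε, Integrable (Ns ε) (νstv ε))
    (hsing : ∀ ε, (νstv ε).MutuallySingular (μtv ε))
    (hadd : ∀ ε : ℝ, ∀ S : Set X, MeasurableSet S →
      ∫ x in S, N ε x ∂(μtv ε) = (∫ x in S, N 0 x ∂(μtv 0)) + ε • ∫ x in S, Nν x ∂νtv)
    (hRN : ∀ ε : ℝ, ∀ S : Set X, MeasurableSet S →
      ∫ x in S, Nν x ∂νtv = (∫ x in S, A ε x ∂(μtv ε)) + ∫ x in S, Ns ε x ∂(νstv ε))
    (F' : ℝ → ℝ)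
    (hF' : ∀ ε : ℝ, νstv ε = 0 →
      HasDerivAt (fun e : ℝ => (μtv e Set.univ).toReal) (F' ε) ε)
    (ε₁ ε₂ : ℝ) (hlt : ε₁ < ε₂) (hreg₁ : νstv ε₁ = 0) (hreg₂ : νstv ε₂ = 0) :
    F' ε₂ - F' ε₁ =
      ∫ x, (1 / (2 * (ε₂ - ε₁))) * ‖N ε₂ x - N ε₁ x‖ ^ 2 ∂(μtv ε₂ + μtv ε₁) ∧
    0 ≤ F' ε₂ - F' ε₁ :=
  derivative_difference_formula_general X k μtv N A νtv Nν νstv Ns hμfin hνfin hN1 hNν1 hNint hNνint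
    hadd hRN F' hF' ε₁ ε₂ hlt hreg₁ hreg₂
end
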